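/- arXiv:1603.05732 — 5 statements merged into one kernel-verified Lean document; each statement's English description precedes it below -/
import Mathlib

section
/- Let f ∈ L^1[0,1] and let I, J, K be dyadic intervals (or [0,2]) such that K is a direct successor (left or right half) of J and J is a direct successor of I. Then ∫_{I \setminus K} |f| dx ≥ | |c_I(f)| − |c_J(f)| | / 2, where c_L(f) denotes the Haar coefficient of f at L. -/
open MeasureTheory Set
open scoped Classical

noncomputable section

/-- The dyadic interval `[k/2^n, (k+1)/2^n)`. -/
def dyadic (n k : ℕ) : Set ℝ := Set.Ico ((k : ℝ) / 2 ^ n) (((k : ℝ) + 1) / 2 ^ n)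

/-- Left half `I⁺` of a dyadic interval. -/
def dplus (n k : ℕ) : Set ℝ := dyadic (n + 1) (2 * k)

/-- Right half `I⁻` of a dyadic interval. -/
def dminus (n k : ℕ) : Set ℝ := dyadic (n + 1) (2 * k + 1)

/-- Haar coefficient `c_I(f)` with respect to the L¹-normalized Haar system. -/
def haarC (f : ℝ → ℝ) (n k : ℕ) : ℝ :=
  (∫ x in dplus n k, f x) - ∫ x in dminus n k, f x

/-- The L¹-normalized Haar function `h_I`. -/
def haarF (n k : ℕ) : ℝ → ℝ := fun x =>
  if x ∈ dplus n k then (2 : ℝ) ^ n else if x ∈ dminus n k then -(2 : ℝ) ^ n else 0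

/-- Index set for the Haar system: the dyadic intervals of `[0,1]` together with `[0,2]`. -/
inductive HIdx where
  | root : HIdx
  | node : ℕ → ℕ → HIdx
  deriving DecidableEq

/-- Validity of an index: `node n k` encodes `[k/2^n, (k+1)/2^n) ⊆ [0,1)`. -/
def HIdx.valid : HIdx → Prop
  | .root => True
  | .node n k => k < 2 ^ n

/-- The interval encoded by an index. -/
def HIdx.iset : HIdx → Set ℝ
  | .root => Set.Ico (0 : ℝ) 2
  | .node n k => dyadic n k

/-- Haar coefficient, where `c_{[0,2]}(f) = ∫_{[0,1)} f` (for `f` supported in `[0,1)`). -/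
def hcoef (f : ℝ → ℝ) : HIdx → ℝ
  | .root => ∫ x in Set.Ico (0 : ℝ) 1, f x
  | .node n k => haarC f n k

/-- `K` is a direct successor (left or right half) of `J`. -/
def dsucc : HIdx → HIdx → Prop
  | .node n k, .root => n = 0 ∧ k = 0
  | .node n k, .node m j => n = m + 1 ∧ (k = 2 * j ∨ k = 2 * j + 1)
  | _, _ => False

lemma core_ineq (sK sK' sJ' iK' iJ' : ℝ) (h1 : |sK'| ≤ iK') (h2 : |sJ'| ≤ iJ')
    (cI cJ : ℝ)
    (hI : cI = sK + sK' - sJ' ∨ cI = sJ' - (sK + sK'))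
    (hJ : cJ = sK - sK' ∨ cJ = sK' - sK) :
    |(|cI| - |cJ|)| / 2 ≤ iK' + iJ' := by
  have hk := abs_le.mp h1
  have hj := abs_le.mp h2
  have A := abs_abs_sub_abs_le_abs_sub cI cJ
  have B : |(|cI| - |cJ|)| ≤ |cI + cJ| := by
    have h := abs_abs_sub_abs_le_abs_sub cI (-cJ)
    simpa [sub_neg_eq_add] using h
  rcases hI with rfl | rfl <;> rcases hJ with rfl | rfl
  · rcases abs_cases (sK + sK' - sJ' - (sK - sK')) with ⟨e, _⟩ | ⟨e, _⟩ <;>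
      rw [e] at A <;> linarith
  · rcases abs_cases (sK + sK' - sJ' + (sK' - sK)) with ⟨e, _⟩ | ⟨e, _⟩ <;>
      rw [e] at B <;> linarith
  · rcases abs_cases (sJ' - (sK + sK') + (sK - sK')) with ⟨e, _⟩ | ⟨e, _⟩ <;>
      rw [e] at B <;> linarith
  · rcases abs_cases (sJ' - (sK + sK') - (sK' - sK)) with ⟨e, _⟩ | ⟨e, _⟩ <;>
      rw [e] at A <;> linarith

lemma abs_setIntegral_le (f : ℝ → ℝ) (s : Set ℝ) :
    |∫ x in s, f x| ≤ ∫ x in s, |f x| := by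
  simpa [Real.norm_eq_abs] using
    norm_integral_le_integral_norm (μ := volume.restrict s) f

lemma abstract_ineq (f : ℝ → ℝ) (hf : Integrable f)
    (Iset J J' K K' : Set ℝ)
    (mJ' : MeasurableSet J') (mK' : MeasurableSet K')
    (hIJ : Iset = J ∪ J') (hd1 : Disjoint J J')
    (hJK : J = K ∪ K') (hd2 : Disjoint K K')
    (cI cJ : ℝ)
    (hcI : cI = (∫ x in J, f x) - ∫ x in J', f x ∨
           cI = (∫ x in J', f x) - ∫ x in J, f x)
    (hcJ : cJ = (∫ x in K, f x) - ∫ x in K', f x ∨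
           cJ = (∫ x in K', f x) - ∫ x in K, f x) :
    |(|cI| - |cJ|)| / 2 ≤ ∫ x in Iset \ K, |f x| := by
  have hJint : (∫ x in J, f x) = (∫ x in K, f x) + ∫ x in K', f x := by
    rw [hJK, setIntegral_union hd2 mK' hf.integrableOn hf.integrableOn]
  have hK'J : K' ⊆ J := hJK ▸ Set.subset_union_right
  have hdK'J' : Disjoint K' J' := hd1.mono_left hK'J
  have hset : Iset \ K = K' ∪ J' := by
    rw [hIJ, hJK, Set.union_diff_distrib, Set.union_diff_distrib, Set.diff_self,
      Set.empty_union, hd2.symm.sdiff_eq_left,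
      (hd1.symm.mono_right (hJK ▸ Set.subset_union_left)).sdiff_eq_left]
  rw [hset, setIntegral_union hdK'J' mJ' hf.abs.integrableOn hf.abs.integrableOn]
  refine core_ineq (∫ x in K, f x) (∫ x in K', f x) (∫ x in J', f x) _ _
    (abs_setIntegral_le f K') (abs_setIntegral_le f J') cI cJ ?_ hcJ
  rcases hcI with h | h
  · left; rw [h, hJint]
  · right; rw [h, hJint]

lemma dyadic_union (n k : ℕ) :
    dyadic n k = dyadic (n + 1) (2 * k) ∪ dyadic (n + 1) (2 * k + 1) := by
  unfold dyadic
  have e1 : ((2 * k : ℕ) : ℝ) + 1 = ((2 * k + 1 : ℕ) : ℝ) := by push_cast; ring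
  have hpos : (0:ℝ) < 2 ^ (n + 1) := by positivity
  have e2 : ((2 * k : ℕ) : ℝ) / 2 ^ (n + 1) = (k : ℝ) / 2 ^ n := by
    rw [div_eq_div_iff (by positivity) (by positivity)]; push_cast; ring
  have e3 : (((2 * k + 1 : ℕ) : ℝ) + 1) / 2 ^ (n + 1) = ((k : ℝ) + 1) / 2 ^ n := by
    rw [div_eq_div_iff (by positivity) (by positivity)]; push_cast; ring
  rw [e1, Set.Ico_union_Ico_eq_Ico
    ((div_le_div_iff_of_pos_right hpos).mpr (by push_cast; linarith))
    ((div_le_div_iff_of_pos_right hpos).mpr (by push_cast; linarith)), e2, e3]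

lemma dyadic_disj (n k : ℕ) :
    Disjoint (dyadic (n + 1) (2 * k)) (dyadic (n + 1) (2 * k + 1)) := by
  unfold dyadic
  have e1 : ((2 * k : ℕ) : ℝ) + 1 = ((2 * k + 1 : ℕ) : ℝ) := by push_cast; ring
  rw [e1]
  exact Set.Ico_disjoint_Ico_same

lemma dyadic_meas (n k : ℕ) : MeasurableSet (dyadic n k) := measurableSet_Ico

lemma node_case (f : ℝ → ℝ) (hf : Integrable f) (n k kJ kK : ℕ)
    (hJ : kJ = 2 * k ∨ kJ = 2 * k + 1) (hK : kK = 2 * kJ ∨ kK = 2 * kJ + 1) :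
    |(|haarC f n k| - |haarC f (n + 1) kJ|)| / 2 ≤
      ∫ x in dyadic n k \ dyadic (n + 2) kK, |f x| := by
  rcases hJ with rfl | rfl <;> rcases hK with rfl | rfl
  · exact abstract_ineq f hf _ _ _ _ _ (dyadic_meas _ _) (dyadic_meas _ _)
      (dyadic_union n k) (dyadic_disj n k)
      (dyadic_union (n + 1) (2 * k)) (dyadic_disj (n + 1) (2 * k))
      _ _ (Or.inl rfl) (Or.inl rfl)
  · exact abstract_ineq f hf _ _ _ _ _ (dyadic_meas _ _) (dyadic_meas _ _)
      (dyadic_union n k) (dyadic_disj n k)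
      ((dyadic_union (n + 1) (2 * k)).trans (Set.union_comm _ _))
      (dyadic_disj (n + 1) (2 * k)).symm
      _ _ (Or.inl rfl) (Or.inr rfl)
  · exact abstract_ineq f hf _ _ _ _ _ (dyadic_meas _ _) (dyadic_meas _ _)
      ((dyadic_union n k).trans (Set.union_comm _ _)) (dyadic_disj n k).symm
      (dyadic_union (n + 1) (2 * k + 1)) (dyadic_disj (n + 1) (2 * k + 1))
      _ _ (Or.inr rfl) (Or.inl rfl)
  · exact abstract_ineq f hf _ _ _ _ _ (dyadic_meas _ _) (dyadic_meas _ _)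
      ((dyadic_union n k).trans (Set.union_comm _ _)) (dyadic_disj n k).symm
      ((dyadic_union (n + 1) (2 * k + 1)).trans (Set.union_comm _ _))
      (dyadic_disj (n + 1) (2 * k + 1)).symm
      _ _ (Or.inr rfl) (Or.inr rfl)

/-- If `K` is a direct successor of `J`, which is a direct successor of `I`, then
`∫_{I∖K} |f| ≥ ||c_I(f)| − |c_J(f)||/2`. -/
theorem stmt2 (f : ℝ → ℝ) (hf : Integrable f)
    (hsupp : ∀ x, x ∉ Set.Ico (0 : ℝ) 1 → f x = 0)
    (I J K : HIdx) (hI : I.valid) (hJ : J.valid) (hK : K.valid)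
    (hJI : dsucc J I) (hKJ : dsucc K J) :
    |(|hcoef f I| - |hcoef f J|)| / 2 ≤ ∫ x in I.iset \ K.iset, |f x| := by
  cases I with
  | root =>
    cases J with
    | root => exact hJI.elim
    | node nJ kJ =>
      obtain ⟨rfl, rfl⟩ := hJI
      cases K with
      | root => exact hKJ.elim
      | node nK kK =>
        obtain ⟨rfl, hk⟩ := hKJ
        have hIco : Set.Ico (0:ℝ) 1 = dyadic 0 0 := by
          unfold dyadic; norm_num
        have hf0 : (∫ x in Set.Ico (1:ℝ) 2, f x) = 0 := by
          apply setIntegral_eq_zero_of_forall_eq_zero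
          intro x hx
          exact hsupp x (by simp only [Set.mem_Ico] at hx ⊢; push_neg; intro; linarith [hx.1])
        have hcIeq : (∫ x in Set.Ico (0:ℝ) 1, f x) =
            (∫ x in Set.Ico (0:ℝ) 1, f x) - ∫ x in Set.Ico (1:ℝ) 2, f x := by
          rw [hf0, sub_zero]
        have hIJ : Set.Ico (0:ℝ) 2 = Set.Ico (0:ℝ) 1 ∪ Set.Ico (1:ℝ) 2 :=
          (Set.Ico_union_Ico_eq_Ico (by norm_num) (by norm_num)).symm
        rcases hk with rfl | rfl
        · exact abstract_ineq f hf _ (Set.Ico 0 1) (Set.Ico 1 2) _ _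
            measurableSet_Ico (dyadic_meas _ _)
            hIJ Set.Ico_disjoint_Ico_same
            (hIco.trans (dyadic_union 0 0)) (dyadic_disj 0 0)
            _ _ (Or.inl hcIeq) (Or.inl rfl)
        · exact abstract_ineq f hf _ (Set.Ico 0 1) (Set.Ico 1 2) _ _
            measurableSet_Ico (dyadic_meas _ _)
            hIJ Set.Ico_disjoint_Ico_same
            ((hIco.trans (dyadic_union 0 0)).trans (Set.union_comm _ _))
            (dyadic_disj 0 0).symm
            _ _ (Or.inl hcIeq) (Or.inr rfl)
  | node nI kI =>
    cases J with
    | root => exact hJI.elim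
    | node nJ kJ =>
      obtain ⟨rfl, hj⟩ := hJI
      cases K with
      | root => exact hKJ.elim
      | node nK kK =>
        obtain ⟨rfl, hk⟩ := hKJ
        exact node_case f hf nI kI kJ kK hj hk
end
end

section
/- Let f ∈ L^1[0,1] and let I, J, K be dyadic intervals (or [0,2]) with K ⊊ J ⊊ I. Then ∫_{I \setminus K} |f| dx ≥ | |c_I(f)| − |c_J(f)| | / 4, where c_L(f) denotes the Haar coefficient of f at L. -/
/-!
Put `S = ∫_J f`. Since `J` lies in one half of `I`, `c_I ∓ S` is a signed integral of `f` over
`I ∖ J`, so `||c_I| - |S|| ≤ ∫_{I∖K} |f|`. Since `K` lies in one half of `J`, the other half `H`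
lies in `I ∖ K`, and `c_J = ±(S - 2 ∫_H f)`, so `||S| - |c_J|| ≤ 2 ∫_{I∖K} |f|`. Adding the two
estimates gives the bound even with `3` in place of `4`.
-/

open MeasureTheory Set
open scoped Classical

noncomputable section

lemma mem_dyadic_iff {n k : ℕ} {x : ℝ} : x ∈ dyadic n k ↔ ⌊x * 2 ^ n⌋ = k := by
  have h : (0 : ℝ) < 2 ^ n := by positivity
  rw [dyadic, mem_Ico, Int.floor_eq_iff, div_le_iff₀ h, lt_div_iff₀ h]
  push_cast
  rfl

lemma dyadic_nonempty (n k : ℕ) : (dyadic n k).Nonempty :=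
  ⟨k / 2 ^ n, mem_dyadic_iff.2 (by simp)⟩

lemma disjoint_dyadic {n a b : ℕ} (h : a ≠ b) : Disjoint (dyadic n a) (dyadic n b) :=
  Set.disjoint_left.2 fun _ ha hb ↦ h <| by
    rw [mem_dyadic_iff] at ha hb
    exact_mod_cast ha.symm.trans hb

lemma eq_of_dyadic_subset {m j n k k' : ℕ} (h : dyadic m j ⊆ dyadic n k)
    (h' : dyadic m j ⊆ dyadic n k') : k = k' := by
  by_contra hne
  obtain ⟨x, hx⟩ := dyadic_nonempty m j
  exact Set.disjoint_left.1 (disjoint_dyadic hne) (h hx) (h' hx)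

lemma dyadic_add_subset (n d j : ℕ) : dyadic (n + d) j ⊆ dyadic n (j / 2 ^ d) := by
  intro x hx
  rw [mem_dyadic_iff] at hx ⊢
  have hscale : x * 2 ^ n = x * 2 ^ (n + d) / ((2 ^ d : ℕ) : ℝ) := by
    push_cast
    rw [pow_add]
    field_simp
  rw [hscale, Int.floor_div_natCast, hx]
  push_cast
  rfl

lemma lt_of_dyadic_ssubset {m j n k : ℕ} (h : dyadic m j ⊂ dyadic n k) : n < m := by
  by_contra! hnm
  obtain ⟨d, rfl⟩ := Nat.exists_eq_add_of_le hnm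
  have hk := dyadic_add_subset m d k
  rw [← eq_of_dyadic_subset subset_rfl (h.subset.trans hk)] at hk
  exact h.not_subset hk

lemma dplus_union_dminus (n k : ℕ) : dplus n k ∪ dminus n k = dyadic n k := by
  have hleft : ((2 * k : ℕ) : ℝ) / 2 ^ (n + 1) = k / 2 ^ n := by
    push_cast; rw [pow_succ]; field_simp
  have hmid : ((2 * k : ℕ) + 1 : ℝ) / 2 ^ (n + 1) = ((2 * k + 1 : ℕ) : ℝ) / 2 ^ (n + 1) := by
    push_cast; ring
  have hright : ((2 * k + 1 : ℕ) + 1 : ℝ) / 2 ^ (n + 1) = (k + 1) / 2 ^ n := by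
    push_cast; rw [pow_succ]; field_simp; ring
  rw [dplus, dminus, dyadic, dyadic, dyadic, hmid, hleft, hright, Ico_union_Ico_eq_Ico]
  · rw [← hleft]; gcongr; linarith
  · rw [← hright]; gcongr; linarith

lemma disjoint_dplus_dminus (n k : ℕ) : Disjoint (dplus n k) (dminus n k) :=
  disjoint_dyadic (by omega)

lemma dyadic_ssubset_subset_dplus_or_dminus {m j n k : ℕ} (h : dyadic m j ⊂ dyadic n k) :
    dyadic m j ⊆ dplus n k ∨ dyadic m j ⊆ dminus n k := by
  obtain ⟨d, rfl⟩ := Nat.exists_eq_add_of_lt (lt_of_dyadic_ssubset h)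
  set q := j / 2 ^ d
  have hq : dyadic (n + d + 1) j ⊆ dyadic (n + 1) q := by
    simpa only [add_right_comm] using dyadic_add_subset (n + 1) d j
  have hk : k = q / 2 :=
    eq_of_dyadic_subset h.subset (hq.trans (by simpa using dyadic_add_subset n 1 q))
  rcases Nat.even_or_odd' q with ⟨r, hr | hr⟩
  · left
    rwa [dplus, show 2 * k = q by omega]
  · right
    rwa [dminus, show 2 * k + 1 = q by omega]

lemma dyadic_subset_Ico_zero_one {n k : ℕ} (h : k < 2 ^ n) : dyadic n k ⊆ Ico (0 : ℝ) 1 := by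
  refine Ico_subset_Ico (by positivity) ((div_le_one (by positivity)).2 ?_)
  exact_mod_cast h

section SetIntegral

variable {α : Type*} [MeasurableSpace α] {μ : Measure α} {f : α → ℝ} {s t P M J K : Set α}

lemma setIntegral_abs_mono_set (hf : IntegrableOn f t μ) (hst : s ⊆ t) :
    ∫ x in s, |f x| ∂μ ≤ ∫ x in t, |f x| ∂μ :=
  setIntegral_mono_set hf.abs (ae_of_all _ fun _ ↦ abs_nonneg _) hst.eventuallyLE

lemma abs_setIntegral_le_of_subset (hf : IntegrableOn f t μ) (hst : s ⊆ t) :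
    |∫ x in s, f x ∂μ| ≤ ∫ x in t, |f x| ∂μ :=
  abs_integral_le_integral_abs.trans (setIntegral_abs_mono_set hf hst)

lemma abs_setIntegral_sub_sub_le (hf : IntegrableOn f (P ∪ M) μ) (hM : MeasurableSet M)
    (hJ : MeasurableSet J) (hPM : Disjoint P M) (hJP : J ⊆ P) :
    |(∫ x in P, f x ∂μ) - (∫ x in M, f x ∂μ) - ∫ x in J, f x ∂μ| ≤
      ∫ x in (P ∪ M) \ J, |f x| ∂μ := by
  have hfP : IntegrableOn f P μ := hf.mono_set subset_union_left
  have hfM : IntegrableOn f M μ := hf.mono_set subset_union_right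
  have hsplit : (P ∪ M) \ J = P \ J ∪ M := by
    rw [union_sdiff_distrib, (hPM.mono_left hJP).symm.sdiff_eq_left]
  have hrearrange : (∫ x in P, f x ∂μ) - (∫ x in M, f x ∂μ) - ∫ x in J, f x ∂μ =
      (∫ x in P \ J, f x ∂μ) - ∫ x in M, f x ∂μ := by
    rw [setIntegral_sdiff hJ hfP hJP]; ring
  rw [hrearrange, hsplit, setIntegral_union (hPM.mono_left sdiff_subset) hM
    (hfP.mono_set sdiff_subset).abs hfM.abs]
  exact (abs_sub _ _).trans (add_le_add abs_integral_le_integral_abs abs_integral_le_integral_abs)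

lemma abs_abs_setIntegral_sub_sub_abs_setIntegral_le (hf : IntegrableOn f (P ∪ M) μ)
    (hP : MeasurableSet P) (hM : MeasurableSet M) (hJ : MeasurableSet J) (hPM : Disjoint P M)
    (hJPM : J ⊆ P ∨ J ⊆ M) :
    |(|(∫ x in P, f x ∂μ) - ∫ x in M, f x ∂μ| - |∫ x in J, f x ∂μ|)| ≤
      ∫ x in (P ∪ M) \ J, |f x| ∂μ := by
  rcases hJPM with hJP | hJM
  · exact (abs_abs_sub_abs_le_abs_sub _ _).trans (abs_setIntegral_sub_sub_le hf hM hJ hPM hJP)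
  · rw [union_comm] at hf ⊢
    rw [abs_sub_comm (∫ x in P, f x ∂μ)]
    exact (abs_abs_sub_abs_le_abs_sub _ _).trans
      (abs_setIntegral_sub_sub_le hf hP hJ hPM.symm hJM)

lemma abs_abs_setIntegral_union_sub_abs_sub_le (hf : IntegrableOn f (P ∪ M) μ)
    (hM : MeasurableSet M) (hPM : Disjoint P M) (hKPM : K ⊆ P ∨ K ⊆ M) :
    |(|(∫ x in P ∪ M, f x ∂μ)| - |(∫ x in P, f x ∂μ) - ∫ x in M, f x ∂μ|)| ≤
      2 * ∫ x in (P ∪ M) \ K, |f x| ∂μ := by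
  have hle : ∀ {N}, N ⊆ P ∪ M → Disjoint N K →
      |∫ x in N, f x ∂μ| ≤ ∫ x in (P ∪ M) \ K, |f x| ∂μ :=
    fun hN hNK ↦ abs_setIntegral_le_of_subset (hf.mono_set sdiff_subset)
      (subset_sdiff.2 ⟨hN, hNK⟩)
  rw [setIntegral_union hPM hM (hf.mono_set subset_union_left) (hf.mono_set subset_union_right)]
  set a := ∫ x in P, f x ∂μ
  set b := ∫ x in M, f x ∂μ
  rcases hKPM with hKP | hKM
  · calc |(|a + b| - |a - b|)| ≤ |(a + b) - (a - b)| := abs_abs_sub_abs_le_abs_sub _ _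
      _ = 2 * |b| := by rw [← abs_two, ← abs_mul]; ring_nf
      _ ≤ _ := by gcongr; exact hle subset_union_right (hPM.symm.mono_right hKP)
  · calc |(|a + b| - |a - b|)| = |(|a + b| - |b - a|)| := by rw [abs_sub_comm a]
      _ ≤ |(a + b) - (b - a)| := abs_abs_sub_abs_le_abs_sub _ _
      _ = 2 * |a| := by rw [← abs_two, ← abs_mul]; ring_nf
      _ ≤ _ := by gcongr; exact hle subset_union_left (hPM.mono_right hKM)

end SetIntegral

namespace HIdx

/-- Halves whose signed integral is `hcoef`: for the root `[0,2]` they are `[0,1)` and `∅`. -/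
def left : HIdx → Set ℝ
  | .root => Ico 0 1
  | .node n k => dplus n k

def right : HIdx → Set ℝ
  | .root => ∅
  | .node n k => dminus n k

@[simp]
lemma iset_node (n k : ℕ) : (node n k).iset = dyadic n k := rfl

lemma hcoef_eq_sub (f : ℝ → ℝ) :
    ∀ L : HIdx, hcoef f L = (∫ x in L.left, f x) - ∫ x in L.right, f x
  | .root => by simp [hcoef, left, right]
  | .node _ _ => rfl

lemma measurableSet_left : ∀ L : HIdx, MeasurableSet L.left
  | .root | .node _ _ => measurableSet_Ico

lemma measurableSet_right : ∀ L : HIdx, MeasurableSet L.right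
  | .root => MeasurableSet.empty
  | .node _ _ => measurableSet_Ico

lemma disjoint_left_right : ∀ L : HIdx, Disjoint L.left L.right
  | .root => disjoint_empty _
  | .node n k => disjoint_dplus_dminus n k

lemma left_union_right_subset : ∀ L : HIdx, L.left ∪ L.right ⊆ L.iset
  | .root => by simpa [left, right, iset] using Ico_subset_Ico_right (by norm_num)
  | .node n k => (dplus_union_dminus n k).subset

lemma exists_eq_node_of_iset_ssubset {L L' : HIdx} (h : L.iset ⊂ L'.iset) (hL' : L'.valid) :
    ∃ n k, L = node n k := by
  cases L with
  | node n k => exact ⟨n, k, rfl⟩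
  | root =>
    cases L' with
    | root => exact absurd h (ssubset_irrefl _)
    | node n k =>
      have h21 : Ico (0 : ℝ) 2 ⊆ Ico 0 1 := h.subset.trans (dyadic_subset_Ico_zero_one hL')
      have := (Ico_subset_Ico_iff (by norm_num)).1 h21
      norm_num at this

lemma dyadic_subset_left_or_right {L : HIdx} {m j : ℕ} (hj : j < 2 ^ m)
    (h : dyadic m j ⊂ L.iset) : dyadic m j ⊆ L.left ∨ dyadic m j ⊆ L.right := by
  cases L with
  | root => exact Or.inl (dyadic_subset_Ico_zero_one hj)
  | node n k => exact dyadic_ssubset_subset_dplus_or_dminus h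

end HIdx

theorem stmt3_general (f : ℝ → ℝ) (hf : Integrable f)
    (I J K : HIdx) (hI : I.valid) (hJ : J.valid)
    (hKJ : K.iset ⊂ J.iset) (hJI : J.iset ⊂ I.iset) :
    |(|hcoef f I| - |hcoef f J|)| / 4 ≤ ∫ x in I.iset \ K.iset, |f x| := by
  obtain ⟨m, j, rfl⟩ := HIdx.exists_eq_node_of_iset_ssubset hJI hI
  obtain ⟨p, q, rfl⟩ := HIdx.exists_eq_node_of_iset_ssubset hKJ hJ
  simp only [HIdx.iset_node] at hKJ hJI ⊢
  set A := ∫ x in I.iset \ dyadic p q, |f x|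
  have hIJ : |(|hcoef f I| - |∫ x in dyadic m j, f x|)| ≤ A := by
    rw [HIdx.hcoef_eq_sub]
    refine (abs_abs_setIntegral_sub_sub_abs_setIntegral_le hf.integrableOn I.measurableSet_left
      I.measurableSet_right measurableSet_Ico I.disjoint_left_right
      (HIdx.dyadic_subset_left_or_right hJ hJI)).trans ?_
    exact setIntegral_abs_mono_set hf.integrableOn
      (sdiff_subset_sdiff I.left_union_right_subset hKJ.subset)
  have hJK : |(|∫ x in dyadic m j, f x| - |hcoef f (.node m j)|)| ≤ 2 * A := by
    have := abs_abs_setIntegral_union_sub_abs_sub_le (P := dplus m j) (M := dminus m j)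
      hf.integrableOn measurableSet_Ico
      (disjoint_dplus_dminus m j) (dyadic_ssubset_subset_dplus_or_dminus hKJ)
    rw [dplus_union_dminus] at this
    refine this.trans ?_
    gcongr
    exact setIntegral_abs_mono_set hf.integrableOn (sdiff_subset_sdiff_left hJI.subset)
  have hA : 0 ≤ A := integral_nonneg fun _ ↦ abs_nonneg _
  linarith [abs_sub_le |hcoef f I| |∫ x in dyadic m j, f x| |hcoef f (.node m j)|]

/-- If `K ⊊ J ⊊ I` then `∫_{I∖K} |f| ≥ ||c_I(f)| − |c_J(f)||/4`. -/
theorem stmt3 (f : ℝ → ℝ) (hf : Integrable f)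
    (hsupp : ∀ x, x ∉ Set.Ico (0 : ℝ) 1 → f x = 0)
    (I J K : HIdx) (hI : I.valid) (hJ : J.valid) (hK : K.valid)
    (hKJ : K.iset ⊂ J.iset) (hJI : J.iset ⊂ I.iset) :
    |(|hcoef f I| - |hcoef f J|)| / 4 ≤ ∫ x in I.iset \ K.iset, |f x| :=
  stmt3_general f hf I J K hI hJ hKJ hJI
end
end

section
/- Let f ∈ L^1[0,1] with c_I(f) = 0 for a dyadic interval I, and let f' = L₁(f,I) be the symmetrization copying f from I^+ to I^-. Then for every dyadic interval J: c_J(f') = c_J(f) if J ⊋ I or J ∩ I = ∅ or J ⊆ I^+; c_I(f') = 0; and c_J(f') = c_{J − m(I)/2}(f) if J ⊆ I^-. In particular every Haar coefficient of f' belongs to {c_K(f) : K dyadic} ∪ {0}. -/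
open MeasureTheory Set
open scoped Classical

noncomputable section

/-- Symmetrization `L₁(f, I)`: copy `f` from the left half `I⁺` onto the right half `I⁻`. -/
def symmL (f : ℝ → ℝ) (n k : ℕ) : ℝ → ℝ := fun x =>
  if x ∈ dminus n k then f (x - 1 / 2 ^ (n + 1)) else f x

/-- Symmetrization `L₂(f, I)`: copy `f` from the right half `I⁻` onto the left half `I⁺`. -/
def symmR (f : ℝ → ℝ) (n k : ℕ) : ℝ → ℝ := fun x =>
  if x ∈ dplus n k then f (x + 1 / 2 ^ (n + 1)) else f x

namespace Stmt7Aux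

lemma mem_dyadic_iff {x : ℝ} {n k : ℕ} :
    x ∈ dyadic n k ↔ (k : ℝ) ≤ x * 2 ^ n ∧ x * 2 ^ n < (k : ℝ) + 1 := by
  unfold dyadic
  rw [Set.mem_Ico, div_le_iff₀ (by positivity), lt_div_iff₀ (by positivity)]

lemma measurableSet_dyadic (n k : ℕ) : MeasurableSet (dyadic n k) := measurableSet_Ico

lemma measurableSet_dplus (n k : ℕ) : MeasurableSet (dplus n k) := measurableSet_Ico

lemma measurableSet_dminus (n k : ℕ) : MeasurableSet (dminus n k) := measurableSet_Ico

lemma left_mem_dyadic (n k : ℕ) : (k : ℝ) / 2 ^ n ∈ dyadic n k := by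
  refine ⟨le_refl _, ?_⟩
  have h : (0:ℝ) < 2 ^ n := by positivity
  rw [div_lt_div_iff₀ h h]
  nlinarith

lemma dyadic_nonempty (n k : ℕ) : (dyadic n k).Nonempty := ⟨_, left_mem_dyadic n k⟩

lemma dyadic_split (n k : ℕ) : dyadic n k = dplus n k ∪ dminus n k := by
  unfold dplus dminus dyadic
  push_cast
  rw [Set.Ico_union_Ico_eq_Ico]
  · congr 1 <;> (rw [pow_succ]; ring)
  · have h : (0:ℝ) < 2 ^ (n+1) := by positivity
    rw [div_le_div_iff₀ h h]; nlinarith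
  · have h : (0:ℝ) < 2 ^ (n+1) := by positivity
    rw [div_le_div_iff₀ h h]; nlinarith

lemma halves_disjoint (n k : ℕ) : Disjoint (dplus n k) (dminus n k) := by
  unfold dplus dminus dyadic
  push_cast
  exact Set.Ico_disjoint_Ico_same

lemma dplus_subset (n k : ℕ) : dplus n k ⊆ dyadic n k := by
  rw [dyadic_split]; exact Set.subset_union_left

lemma dminus_subset (n k : ℕ) : dminus n k ⊆ dyadic n k := by
  rw [dyadic_split]; exact Set.subset_union_right

lemma bounds_of_inter {N K p j : ℕ}
    (h : (dyadic (N + p) j ∩ dyadic N K).Nonempty) :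
    K * 2 ^ p ≤ j ∧ j + 1 ≤ (K + 1) * 2 ^ p := by
  obtain ⟨x, hx1, hx2⟩ := h
  rw [mem_dyadic_iff] at hx1 hx2
  have hxe : x * 2 ^ (N + p) = x * 2 ^ N * 2 ^ p := by rw [pow_add, mul_assoc]
  rw [hxe] at hx1
  have hp : (0:ℝ) < 2 ^ p := by positivity
  constructor
  · have h1 : (K : ℝ) * 2 ^ p < (j : ℝ) + 1 := by nlinarith [hx2.1, hx1.2]
    have h1' : (K * 2 ^ p : ℕ) < j + 1 := by exact_mod_cast
      (by push_cast; linarith : ((K * 2 ^ p : ℕ) : ℝ) < ((j + 1 : ℕ) : ℝ))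
    omega
  · have h2 : (j : ℝ) < ((K : ℝ) + 1) * 2 ^ p := by nlinarith [hx2.2, hx1.1]
    have h2' : (j : ℕ) < (K + 1) * 2 ^ p := by exact_mod_cast
      (by push_cast; linarith : ((j : ℕ) : ℝ) < (((K + 1) * 2 ^ p : ℕ) : ℝ))
    omega

lemma subset_of_bounds {N K p j : ℕ} (h1 : K * 2 ^ p ≤ j) (h2 : j + 1 ≤ (K + 1) * 2 ^ p) :
    dyadic (N + p) j ⊆ dyadic N K := by
  intro z hz
  rw [mem_dyadic_iff] at hz ⊢
  have hze : z * 2 ^ (N + p) = z * 2 ^ N * 2 ^ p := by rw [pow_add, mul_assoc]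
  rw [hze] at hz
  have hp : (0:ℝ) < 2 ^ p := by positivity
  have h1' : (K : ℝ) * 2 ^ p ≤ (j : ℝ) := by exact_mod_cast h1
  have h2' : (j : ℝ) + 1 ≤ ((K : ℝ) + 1) * 2 ^ p := by exact_mod_cast h2
  constructor
  · nlinarith [hz.1]
  · nlinarith [hz.2]

lemma subset_or_disjoint (N K p j : ℕ) :
    dyadic (N + p) j ⊆ dyadic N K ∨ dyadic (N + p) j ∩ dyadic N K = ∅ := by
  by_cases h : dyadic (N + p) j ∩ dyadic N K = ∅
  · exact Or.inr h
  · obtain ⟨h1, h2⟩ := bounds_of_inter (Set.nonempty_iff_ne_empty.mpr h)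
    exact Or.inl (subset_of_bounds h1 h2)

lemma level_le {m j n k : ℕ} (h : dyadic m j ⊆ dyadic n k) : n ≤ m := by
  unfold dyadic at h
  have hm : (0:ℝ) < 2 ^ m := by positivity
  have hn : (0:ℝ) < 2 ^ n := by positivity
  have hab : (j:ℝ)/2^m < ((j:ℝ)+1)/2^m := by rw [div_lt_div_iff₀ hm hm]; nlinarith
  rw [Set.Ico_subset_Ico_iff hab] at h
  have e1 : ((j:ℝ)+1)/2^m = (j:ℝ)/2^m + 1/2^m := by ring
  have e2 : ((k:ℝ)+1)/2^n = (k:ℝ)/2^n + 1/2^n := by ring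
  have hle : (1:ℝ)/2^m ≤ 1/2^n := by
    have ha := h.1; have hb := h.2; rw [e1, e2] at hb; linarith
  by_contra hh
  push_neg at hh
  have hlt : (2:ℝ)^m < 2^n := by
    have := Nat.pow_lt_pow_right (one_lt_two) hh
    exact_mod_cast this
  rw [div_le_div_iff₀ hm hn] at hle
  nlinarith

lemma index_eq {n j k : ℕ} (h : dyadic n j ⊆ dyadic n k) : j = k := by
  have hne : (dyadic (n + 0) j ∩ dyadic n k).Nonempty := by
    obtain ⟨x, hx⟩ := dyadic_nonempty n j
    exact ⟨x, by simpa using hx, h hx⟩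
  obtain ⟨h1, h2⟩ := bounds_of_inter hne
  simp only [pow_zero, mul_one] at h1 h2
  omega

lemma dyadic_eq {m j n k : ℕ} (h : dyadic m j = dyadic n k) : m = n ∧ j = k := by
  have h1 : n ≤ m := level_le h.subset
  have h2 : m ≤ n := level_le h.symm.subset
  have hm : m = n := le_antisymm h2 h1
  subst hm
  exact ⟨rfl, index_eq h.subset⟩

lemma subset_half {m j n k : ℕ} (h : dyadic m j ⊆ dyadic n k)
    (hne : dyadic m j ≠ dyadic n k) :
    dyadic m j ⊆ dplus n k ∨ dyadic m j ⊆ dminus n k := by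
  have hnm : n ≤ m := level_le h
  have hnm' : n + 1 ≤ m := by
    rcases Nat.eq_or_lt_of_le hnm with he | hlt
    · exfalso; subst he; exact hne (by rw [index_eq h])
    · omega
  obtain ⟨p, rfl⟩ : ∃ p, m = (n + 1) + p := ⟨m - (n + 1), by omega⟩
  rcases subset_or_disjoint (n+1) (2*k) p j with hs | hd
  · exact Or.inl hs
  rcases subset_or_disjoint (n+1) (2*k+1) p j with hs | hd'
  · exact Or.inr hs
  exfalso
  obtain ⟨x, hx⟩ := dyadic_nonempty (n+1+p) j
  have hx' := h hx
  rw [dyadic_split] at hx'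
  rcases hx' with h' | h'
  · have hxx : x ∈ dyadic (n+1+p) j ∩ dyadic (n+1) (2*k) := ⟨hx, h'⟩
    rw [hd] at hxx; exact hxx
  · have hxx : x ∈ dyadic (n+1+p) j ∩ dyadic (n+1) (2*k+1) := ⟨hx, h'⟩
    rw [hd'] at hxx; exact hxx

/-! Integration lemmas -/

lemma translate_Ico (f : ℝ → ℝ) (a b c : ℝ) :
    ∫ x in Ico a b, f (x - c) = ∫ x in Ico (a - c) (b - c), f x := by
  have h := (measurePreserving_sub_right (volume : Measure ℝ) c).setIntegral_image_emb
    (MeasurableEquiv.subRight c).measurableEmbedding f (Ico a b)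
  rw [Set.image_sub_const_Ico] at h
  exact h.symm

variable {f : ℝ → ℝ} {n k : ℕ} {S : Set ℝ}

lemma integrable_symmL (hf : Integrable f) (n k : ℕ) : Integrable (symmL f n k) := by
  have h1 : Integrable (fun x : ℝ => f (x - 1 / 2 ^ (n + 1))) := hf.comp_sub_right _
  have he : symmL f n k = (dminus n k).piecewise (fun x => f (x - 1 / 2 ^ (n + 1))) f := by
    funext x; simp [symmL, Set.piecewise]
  rw [he]
  exact Integrable.piecewise (measurableSet_dminus _ _) h1.integrableOn hf.integrableOn

lemma int_off (hS : MeasurableSet S) (hd : S ∩ dminus n k = ∅) :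
    ∫ x in S, symmL f n k x = ∫ x in S, f x := by
  refine setIntegral_congr_fun hS (fun x hx => ?_)
  have hxm : x ∉ dminus n k := fun hm => by
    have hxx : x ∈ S ∩ dminus n k := ⟨hx, hm⟩
    rw [hd] at hxx; exact hxx
  simp [symmL, hxm]

lemma int_dminus (f : ℝ → ℝ) (n k : ℕ) :
    ∫ x in dminus n k, symmL f n k x = ∫ x in dplus n k, f x := by
  have e1 : ∫ x in dminus n k, symmL f n k x
      = ∫ x in dminus n k, f (x - 1 / 2 ^ (n + 1)) :=
    setIntegral_congr_fun (measurableSet_dminus n k) (fun x hx => by simp [symmL, hx])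
  rw [e1]
  show (∫ x in Ico (((2*k+1 : ℕ) : ℝ) / 2 ^ (n+1)) ((((2*k+1 : ℕ) : ℝ) + 1) / 2 ^ (n+1)),
      f (x - 1 / 2 ^ (n+1))) = _
  rw [translate_Ico]
  have h1 : ((2*k+1 : ℕ) : ℝ) / 2 ^ (n+1) - 1 / 2 ^ (n+1) = ((2*k : ℕ) : ℝ) / 2 ^ (n+1) := by
    push_cast; ring
  have h2 : (((2*k+1 : ℕ) : ℝ) + 1) / 2 ^ (n+1) - 1 / 2 ^ (n+1)
      = (((2*k : ℕ) : ℝ) + 1) / 2 ^ (n+1) := by push_cast; ring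
  rw [h1, h2]
  rfl

lemma int_split {g : ℝ → ℝ} (hg : Integrable g) {S T : Set ℝ}
    (hS : MeasurableSet S) (hT : MeasurableSet T) (hsub : T ⊆ S) :
    ∫ x in S, g x = (∫ x in T, g x) + ∫ x in S \ T, g x := by
  rw [← setIntegral_union disjoint_sdiff_right (hS.diff hT)
    hg.integrableOn hg.integrableOn, Set.union_diff_cancel hsub]

lemma int_sym (hf : Integrable f) (hc : haarC f n k = 0)
    (hS : MeasurableSet S) (h : dminus n k ⊆ S ∨ S ∩ dminus n k = ∅) :
    ∫ x in S, symmL f n k x = ∫ x in S, f x := by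
  rcases h with h | h
  · rw [int_split (integrable_symmL hf n k) hS (measurableSet_dminus n k) h,
      int_split hf hS (measurableSet_dminus n k) h,
      int_dminus, int_off (hS.diff (measurableSet_dminus n k)) (Set.diff_inter_self)]
    have hc' : (∫ x in dplus n k, f x) = ∫ x in dminus n k, f x := by
      have hcc := hc; unfold haarC at hcc; linarith
    rw [hc']
  · exact int_off hS h

lemma haarC_symmL_self (hf : Integrable f) (n k : ℕ) : haarC (symmL f n k) n k = 0 := by
  unfold haarC
  rw [int_dminus, int_off (measurableSet_dplus n k)
    (Set.disjoint_iff_inter_eq_empty.mp (halves_disjoint n k)), sub_self]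

lemma haarC_symmL_eq (hf : Integrable f) (hc : haarC f n k = 0) {m j : ℕ}
    (h1 : dminus n k ⊆ dplus m j ∨ dplus m j ∩ dminus n k = ∅)
    (h2 : dminus n k ⊆ dminus m j ∨ dminus m j ∩ dminus n k = ∅) :
    haarC (symmL f n k) m j = haarC f m j := by
  unfold haarC
  rw [int_sym hf hc (measurableSet_dplus m j) h1, int_sym hf hc (measurableSet_dminus m j) h2]

end Stmt7Aux

open Stmt7Aux

/-- Haar coefficients of the symmetrization `f' = L₁(f,I)` when `c_I(f) = 0`. -/
theorem stmt7 (f : ℝ → ℝ) (hf : Integrable f)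
    (n k : ℕ) (hk : k < 2 ^ n) (hc : haarC f n k = 0) :
    (∀ m j : ℕ, j < 2 ^ m →
      ((dyadic n k ⊂ dyadic m j ∨ dyadic m j ∩ dyadic n k = ∅ ∨ dyadic m j ⊆ dplus n k) →
        haarC (symmL f n k) m j = haarC f m j) ∧
      (dyadic m j ⊆ dminus n k →
        haarC (symmL f n k) m j = haarC f m (j - 2 ^ (m - (n + 1))))) ∧
    haarC (symmL f n k) n k = 0 ∧
    (∀ m j : ℕ, j < 2 ^ m → haarC (symmL f n k) m j = 0 ∨
      ∃ m' j' : ℕ, j' < 2 ^ m' ∧ haarC (symmL f n k) m j = haarC f m' j') := by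
  have key1 : ∀ m j : ℕ,
      (dyadic n k ⊂ dyadic m j ∨ dyadic m j ∩ dyadic n k = ∅ ∨ dyadic m j ⊆ dplus n k) →
      haarC (symmL f n k) m j = haarC f m j := by
    intro m j h
    rcases h with h | h | h
    · -- strict superset
      rcases subset_half h.subset (fun he => h.ne he) with hs | hs
      · have hmin : dminus n k ⊆ dplus m j := (dminus_subset n k).trans hs
        refine haarC_symmL_eq hf hc (Or.inl hmin) (Or.inr ?_)
        exact Set.disjoint_iff_inter_eq_empty.mp
          ((halves_disjoint m j).symm.mono_right hmin)
      · have hmin : dminus n k ⊆ dminus m j := (dminus_subset n k).trans hs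
        refine haarC_symmL_eq hf hc (Or.inr ?_) (Or.inl hmin)
        exact Set.disjoint_iff_inter_eq_empty.mp
          ((halves_disjoint m j).mono_right hmin)
    · -- disjoint
      have hd : Disjoint (dyadic m j) (dminus n k) :=
        (Set.disjoint_iff_inter_eq_empty.mpr h).mono_right (dminus_subset n k)
      exact haarC_symmL_eq hf hc
        (Or.inr (Set.disjoint_iff_inter_eq_empty.mp (hd.mono_left (dplus_subset m j))))
        (Or.inr (Set.disjoint_iff_inter_eq_empty.mp (hd.mono_left (dminus_subset m j))))
    · -- inside dplus n k
      have hd : Disjoint (dyadic m j) (dminus n k) :=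
        (halves_disjoint n k).mono_left h
      exact haarC_symmL_eq hf hc
        (Or.inr (Set.disjoint_iff_inter_eq_empty.mp (hd.mono_left (dplus_subset m j))))
        (Or.inr (Set.disjoint_iff_inter_eq_empty.mp (hd.mono_left (dminus_subset m j))))
  have key2 : ∀ m j : ℕ, dyadic m j ⊆ dminus n k →
      haarC (symmL f n k) m j = haarC f m (j - 2 ^ (m - (n + 1))) := by
    intro m j h
    have hm : n + 1 ≤ m := level_le h
    obtain ⟨p, rfl⟩ : ∃ p, m = (n + 1) + p := ⟨m - (n + 1), by omega⟩
    have hpe : (n + 1) + p - (n + 1) = p := by omega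
    rw [hpe]
    have hb := bounds_of_inter (N := n+1) (K := 2*k+1) (p := p) (j := j)
      ⟨_, left_mem_dyadic _ j, h (left_mem_dyadic _ j)⟩
    have hj : 2 ^ p ≤ j := by
      have h1 : 2 ^ p ≤ (2*k+1) * 2 ^ p := Nat.le_mul_of_pos_left _ (by omega)
      exact le_trans h1 hb.1
    have hpow : (2:ℕ) ^ (p+1) = 2 * 2 ^ p := by rw [pow_succ]; ring
    have hgen : ∀ i : ℕ, 2 ^ (p+1) ≤ i → dyadic (n+1+p+1) i ⊆ dminus n k →
        (∫ x in dyadic (n+1+p+1) i, symmL f n k x)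
          = ∫ x in dyadic (n+1+p+1) (i - 2 ^ (p+1)), f x := by
      intro i hi hsub
      have e1 : (∫ x in dyadic (n+1+p+1) i, symmL f n k x)
          = ∫ x in dyadic (n+1+p+1) i, f (x - 1 / 2 ^ (n + 1)) :=
        setIntegral_congr_fun (measurableSet_dyadic _ _)
          (fun x hx => by simp [symmL, hsub hx])
      rw [e1]
      show (∫ x in Ico ((i : ℝ) / 2 ^ (n+1+p+1)) (((i : ℝ) + 1) / 2 ^ (n+1+p+1)),
        f (x - 1 / 2 ^ (n+1))) = _
      rw [translate_Ico]
      have hcast : ((i - 2 ^ (p+1) : ℕ) : ℝ) = (i : ℝ) - 2 ^ (p+1) := by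
        rw [Nat.cast_sub hi]; push_cast; ring
      have h1 : (i : ℝ) / 2 ^ (n+1+p+1) - 1 / 2 ^ (n+1)
          = ((i - 2 ^ (p+1) : ℕ) : ℝ) / 2 ^ (n+1+p+1) := by
        rw [hcast]
        have : (2:ℝ) ^ (n+1+p+1) = 2 ^ (n+1) * 2 ^ (p+1) := by rw [← pow_add]; ring_nf
        rw [this]
        field_simp
      have h2 : ((i : ℝ) + 1) / 2 ^ (n+1+p+1) - 1 / 2 ^ (n+1)
          = (((i - 2 ^ (p+1) : ℕ) : ℝ) + 1) / 2 ^ (n+1+p+1) := by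
        rw [hcast]
        have : (2:ℝ) ^ (n+1+p+1) = 2 ^ (n+1) * 2 ^ (p+1) := by rw [← pow_add]; ring_nf
        rw [this]
        field_simp
        ring
      rw [h1, h2]
      rfl
    have hL := hgen (2*j) (by omega) ((dplus_subset (n+1+p) j).trans h)
    have hR := hgen (2*j+1) (by omega) ((dminus_subset (n+1+p) j).trans h)
    have eL : 2*j - 2^(p+1) = 2*(j - 2^p) := by omega
    have eR : 2*j+1 - 2^(p+1) = 2*(j - 2^p)+1 := by omega
    rw [eL] at hL
    rw [eR] at hR
    show (∫ x in dyadic (n+1+p+1) (2*j), symmL f n k x)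
        - (∫ x in dyadic (n+1+p+1) (2*j+1), symmL f n k x)
      = (∫ x in dyadic (n+1+p+1) (2*(j - 2^p)), f x)
        - (∫ x in dyadic (n+1+p+1) (2*(j - 2^p)+1), f x)
    rw [hL, hR]
  refine ⟨fun m j _ => ⟨key1 m j, key2 m j⟩, haarC_symmL_self hf n k, ?_⟩
  intro m j hj
  rcases Nat.lt_trichotomy m n with hmn | rfl | hmn
  · obtain ⟨d, rfl⟩ : ∃ d, n = m + d := ⟨n - m, by omega⟩
    rcases subset_or_disjoint m j d k with hs | hd
    · have hne : dyadic (m+d) k ≠ dyadic m j := fun he => by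
        have := (dyadic_eq he).1; omega
      exact Or.inr ⟨m, j, hj, key1 m j (Or.inl ⟨hs, fun hsub => hne
        (Set.Subset.antisymm hs hsub)⟩)⟩
    · exact Or.inr ⟨m, j, hj, key1 m j (Or.inr (Or.inl (by
        rw [Set.inter_comm]; exact hd)))⟩
  · rcases subset_or_disjoint m k 0 j with hs | hd
    · have hjk : j = k := index_eq hs
      subst hjk
      exact Or.inl (haarC_symmL_self hf m j)
    · exact Or.inr ⟨m, j, hj, key1 m j (Or.inr (Or.inl hd))⟩
  · obtain ⟨d, rfl⟩ : ∃ d, m = n + d := ⟨m - n, by omega⟩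
    rcases subset_or_disjoint n k d j with hs | hd
    · have hne : dyadic (n+d) j ≠ dyadic n k := fun he => by
        have := (dyadic_eq he).1; omega
      rcases subset_half hs hne with hh | hh
      · exact Or.inr ⟨n+d, j, hj, key1 (n+d) j (Or.inr (Or.inr hh))⟩
      · refine Or.inr ⟨n+d, j - 2 ^ (n+d - (n+1)), ?_, key2 (n+d) j hh⟩
        exact lt_of_le_of_lt (Nat.sub_le _ _) hj
    · exact Or.inr ⟨n+d, j, hj, key1 (n+d) j (Or.inr (Or.inl hd))⟩
end
end

section
/- Let f, g ∈ L^1[0,1] have finite disjoint Haar supports contained in the dyadic intervals strictly inside [0,1] (excluding [0,1] itself and [0,2]). Let F(f) = {I dyadic : c_I(f) = 0 but c_{I^+}(f) ≠ 0 or c_{I^-}(f) ≠ 0} and assume supp_H(g) ∩ F(f) = ∅. Assume that for some α > 0, |c_J(f)| ≥ α for all J ∈ supp_H(f), and |c_J(g)| ≤ 1 for all J ∈ supp_H(g). Then ‖f‖_{L^1} ≤ (5/α + 1)·‖f + g‖_{L^1}. -/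
open MeasureTheory Set
open scoped Classical

noncomputable section

/-!
A potential-function argument on the dyadic tree. Choose `N` above the levels of all Haar
coefficients of `f`. The primitive of `f` minus its mean on a dyadic interval of level `N`
vanishes at all finer dyadic points, hence everywhere, so by the Lebesgue differentiation theorem
`f` is a.e. constant there; thus `∫_I |f| = |∫_I f|` on every interval `I` below which `f` has
no Haar coefficient.

For a node `I` put `a = ∫_I f`, `b = ∫_I g` (so `|b| ≤ 1`), `β = 5/α` and
`φ(s) = min(2, β/2 · (α - s)⁺)`. The potential of `I` is `(1 + β)|a + b| - |a|` if no Haar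
coefficient of `f` lives in the subtree of `I`, and otherwise `2 + sign(a) b` or
`2 - |b| + φ(|a + b|)` according as `c_I(f)` vanishes or not. The hypotheses on the supports and
on the sizes of the coefficients make the potential of an active node at most the sum of the
potentials of its children, so by induction from level `N` upwards
`∫_I |f| + pot(I) ≤ (1 + β) ∫_I |f + g|`. At the root `b = 0`, so the potential is nonnegative.
-/

open Filter Topology

namespace DyadicHaar

def dyadicIntegral (f : ℝ → ℝ) (n k : ℕ) : ℝ := ∫ x in dyadic n k, f x

lemma measurableSet_dyadic (n k : ℕ) : MeasurableSet (dyadic n k) := measurableSet_Ico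

lemma measureReal_dyadic (n k : ℕ) : volume.real (dyadic n k) = 1 / 2 ^ n := by
  rw [dyadic, Real.volume_real_Ico_of_le (by gcongr; linarith)]
  ring

lemma dyadic_zero_zero : dyadic 0 0 = Ico 0 1 := by
  simp [dyadic]

lemma mem_dyadic_iff {n k : ℕ} {x : ℝ} : x ∈ dyadic n k ↔ k ≤ x * 2 ^ n ∧ x * 2 ^ n < k + 1 := by
  rw [dyadic, mem_Ico, div_le_iff₀ (by positivity), lt_div_iff₀ (by positivity)]

lemma nonneg_of_mem_dyadic {n k : ℕ} {x : ℝ} (hx : x ∈ dyadic n k) : 0 ≤ x :=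
  le_trans (by positivity) hx.1

lemma disjoint_dyadic (n : ℕ) {i j : ℕ} (hij : i ≠ j) : Disjoint (dyadic n i) (dyadic n j) := by
  refine disjoint_left.mpr fun x hi hj => hij ?_
  rw [mem_dyadic_iff] at hi hj
  have hij : i < j + 1 := by exact_mod_cast (by linarith : (i : ℝ) < j + 1)
  have hji : j < i + 1 := by exact_mod_cast (by linarith : (j : ℝ) < i + 1)
  omega

lemma dyadic_subset_dyadic_div (N d j : ℕ) : dyadic (N + d) j ⊆ dyadic N (j / 2 ^ d) := by
  intro x hx
  rw [mem_dyadic_iff, pow_add, ← mul_assoc] at hx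
  rw [mem_dyadic_iff]
  have hlow : ((j / 2 ^ d : ℕ) : ℝ) * 2 ^ d ≤ j := by exact_mod_cast Nat.div_mul_le_self j (2 ^ d)
  have hupp : (j : ℝ) + 1 ≤ ((j / 2 ^ d : ℕ) + 1) * 2 ^ d := by
    exact_mod_cast Nat.lt_mul_of_div_lt (Nat.lt_succ_self _) (by positivity)
  have h2d : (0 : ℝ) < 2 ^ d := by positivity
  constructor
  · exact le_of_mul_le_mul_right (by linarith) h2d
  · exact lt_of_mul_lt_mul_right (by linarith) h2d.le

lemma dplus_union_dminus (n k : ℕ) : dplus n k ∪ dminus n k = dyadic n k := by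
  have h2 : (0 : ℝ) < 2 ^ n := by positivity
  have e1 : ((2 * k : ℕ) : ℝ) / 2 ^ (n + 1) = k / 2 ^ n := by
    rw [pow_succ]; push_cast; field_simp
  have e2 : (((2 * k + 1 : ℕ) : ℝ) + 1) / 2 ^ (n + 1) = (k + 1) / 2 ^ n := by
    rw [pow_succ]; push_cast; field_simp; ring
  have e3 : (((2 * k : ℕ) : ℝ) + 1) = ((2 * k + 1 : ℕ) : ℝ) := by push_cast; ring
  rw [dplus, dminus, dyadic, dyadic, dyadic, e1, e2, e3, Ico_union_Ico_eq_Ico]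
  · rw [div_le_div_iff₀ h2 (by positivity), pow_succ]; push_cast; nlinarith
  · rw [div_le_div_iff₀ (by positivity) h2, pow_succ]; push_cast; nlinarith

lemma disjoint_dplus_dminus (n k : ℕ) : Disjoint (dplus n k) (dminus n k) := by
  have e : (((2 * k : ℕ) : ℝ) + 1) = ((2 * k + 1 : ℕ) : ℝ) := by push_cast; ring
  rw [dplus, dminus, dyadic, dyadic, e]
  exact Ico_disjoint_Ico_same

lemma dyadicIntegral_eq_add {u : ℝ → ℝ} (hu : Integrable u) (n k : ℕ) :
    dyadicIntegral u n k =
      dyadicIntegral u (n + 1) (2 * k) + dyadicIntegral u (n + 1) (2 * k + 1) := by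
  rw [dyadicIntegral, ← dplus_union_dminus,
    setIntegral_union (disjoint_dplus_dminus n k) measurableSet_Ico hu.integrableOn hu.integrableOn]
  rfl

lemma haarC_eq_sub (u : ℝ → ℝ) (n k : ℕ) :
    haarC u n k = dyadicIntegral u (n + 1) (2 * k) - dyadicIntegral u (n + 1) (2 * k + 1) := rfl

lemma abs_dyadicIntegral_succ_le {u : ℝ → ℝ} (hu : Integrable u) (n j : ℕ) :
    |dyadicIntegral u (n + 1) j| ≤ (|dyadicIntegral u n (j / 2)| + |haarC u n (j / 2)|) / 2 := by
  have hsum := dyadicIntegral_eq_add hu n (j / 2)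
  have hdiff := haarC_eq_sub u n (j / 2)
  obtain ⟨p, rfl | rfl⟩ := Nat.even_or_odd' j
  · rw [Nat.mul_div_cancel_left p two_pos] at *
    calc |dyadicIntegral u (n + 1) (2 * p)| = |dyadicIntegral u n p + haarC u n p| / 2 := by
          rw [← abs_two, ← abs_div]; congr 1; linarith
      _ ≤ _ := by gcongr; exact abs_add_le _ _
  · rw [show (2 * p + 1) / 2 = p by omega] at *
    calc |dyadicIntegral u (n + 1) (2 * p + 1)| = |dyadicIntegral u n p - haarC u n p| / 2 := by
          rw [← abs_two, ← abs_div]; congr 1; linarith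
      _ ≤ _ := by gcongr; exact abs_sub _ _

lemma dyadicIntegral_succ_of_haarC_eq_zero {u : ℝ → ℝ} (hu : Integrable u) {n : ℕ} (j : ℕ)
    (hz : haarC u n (j / 2) = 0) : dyadicIntegral u (n + 1) j = dyadicIntegral u n (j / 2) / 2 := by
  have hsum := dyadicIntegral_eq_add hu n (j / 2)
  have hdiff := haarC_eq_sub u n (j / 2)
  obtain ⟨p, rfl | rfl⟩ := Nat.even_or_odd' j
  · rw [Nat.mul_div_cancel_left p two_pos] at *; linarith
  · rw [show (2 * p + 1) / 2 = p by omega] at *; linarith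

lemma dyadicIntegral_add_eq_div_of_haarC_eq_zero {u : ℝ → ℝ} (hu : Integrable u) {N : ℕ}
    (hz : ∀ m j, N ≤ m → j < 2 ^ m → haarC u m j = 0) (d j : ℕ) (hj : j < 2 ^ (N + d)) :
    dyadicIntegral u (N + d) j = dyadicIntegral u N (j / 2 ^ d) / 2 ^ d := by
  induction d generalizing j with
  | zero => simp
  | succ d ih =>
    have hj2 : j / 2 < 2 ^ (N + d) := by rw [Nat.div_lt_iff_lt_mul two_pos, ← pow_succ]; exact hj
    rw [← add_assoc, dyadicIntegral_succ_of_haarC_eq_zero hu j (hz _ _ (by omega) hj2), ih _ hj2,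
      Nat.div_div_eq_div_mul, ← pow_succ', pow_succ]
    ring

theorem ae_eq_zero_of_integral_dyadic_eq_zero {u : ℝ → ℝ} (hu : Integrable u) (N : ℕ)
    (h : ∀ m j, N ≤ m → ∫ x in dyadic m j, u x = 0) : ∀ᵐ x, 0 < x → u x = 0 := by
  set G : ℝ → ℝ := fun x => ∫ t in (0 : ℝ)..x, u t
  have hG_dyadic : ∀ m, N ≤ m → ∀ j : ℕ, G (j / 2 ^ m) = 0 := by
    intro m hm j
    induction j with
    | zero => simp [G]
    | succ j ih =>
      have hstep : G ((j + 1 : ℕ) / 2 ^ m) - G (j / 2 ^ m) = ∫ x in dyadic m j, u x := by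
        have hle : (j : ℝ) / 2 ^ m ≤ (j + 1 : ℕ) / 2 ^ m := by gcongr; simp
        simp only [G]
        rw [intervalIntegral.integral_interval_sub_left hu.intervalIntegrable
          hu.intervalIntegrable, intervalIntegral.integral_of_le hle,
          ← integral_Ico_eq_integral_Ioc, dyadic, Nat.cast_succ]
      linarith [h m j hm]
  have hG : ∀ x, 0 ≤ x → G x = 0 := by
    intro x hx
    set xs : ℕ → ℝ := fun m => (⌊x * 2 ^ m⌋₊ : ℝ) / 2 ^ m
    have hxs_le : ∀ m, xs m ≤ x := fun m => by
      rw [div_le_iff₀ (by positivity)]; exact Nat.floor_le (by positivity)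
    have hxs_ge : ∀ m, x - (2 ^ m)⁻¹ ≤ xs m := fun m => by
      have := Nat.lt_floor_add_one (x * 2 ^ m)
      show _ ≤ _ / _
      rw [le_div_iff₀ (by positivity), sub_mul, inv_mul_cancel₀ (by positivity)]
      linarith
    have hlim : Tendsto xs atTop (𝓝 x) := by
      refine tendsto_of_tendsto_of_tendsto_of_le_of_le ?_ tendsto_const_nhds hxs_ge hxs_le
      simpa using (tendsto_const_nhds (x := x)).sub
        (tendsto_inv_atTop_zero.comp (tendsto_pow_atTop_atTop_of_one_lt one_lt_two))
    refine tendsto_nhds_unique (((hu.continuous_primitive 0).tendsto x).comp hlim) ?_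
    exact tendsto_const_nhds.congr' (eventually_atTop.mpr ⟨N, fun m hm => (hG_dyadic m hm _).symm⟩)
  filter_upwards [LocallyIntegrable.ae_hasDerivAt_integral hu.locallyIntegrable] with x hx hpos
  have hG0 : HasDerivAt G 0 x := (hasDerivAt_const x (0 : ℝ)).congr_of_eventuallyEq
    (eventually_of_mem (Ioi_mem_nhds hpos) fun y hy => hG y (le_of_lt hy))
  exact (hx 0).unique hG0

theorem integral_abs_dyadic_of_haarC_eq_zero {f : ℝ → ℝ} (hf : Integrable f) {N : ℕ}
    (hz : ∀ m j, N ≤ m → j < 2 ^ m → haarC f m j = 0) {k : ℕ} (hk : k < 2 ^ N) :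
    ∫ x in dyadic N k, |f x| = |dyadicIntegral f N k| := by
  set K := dyadic N k
  set c : ℝ := 2 ^ N * dyadicIntegral f N k
  have hc : ∀ m j, IntegrableOn (fun _ => c) (dyadic m j) :=
    fun m j => integrableOn_const measure_Ico_lt_top.ne
  have hu : Integrable (K.indicator fun x => f x - c) :=
    (hf.integrableOn.sub (hc N k)).integrable_indicator (measurableSet_dyadic N k)
  have hcells : ∀ m j, N ≤ m → ∫ x in dyadic m j, K.indicator (fun x => f x - c) x = 0 := by
    intro m j hm
    obtain ⟨d, rfl⟩ := Nat.exists_eq_add_of_le hm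
    rw [setIntegral_indicator (measurableSet_dyadic N k)]
    by_cases hjk : j / 2 ^ d = k
    · have hsub : dyadic (N + d) j ⊆ K := by simpa [K, hjk] using dyadic_subset_dyadic_div N d j
      have hj : j < 2 ^ (N + d) := by
        rw [pow_add]; exact Nat.lt_mul_of_div_lt (hjk ▸ hk) (by positivity)
      rw [inter_eq_self_of_subset_left hsub, integral_sub hf.integrableOn (hc _ _),
        setIntegral_const, measureReal_dyadic, smul_eq_mul]
      change dyadicIntegral f (N + d) j - _ = 0
      rw [dyadicIntegral_add_eq_div_of_haarC_eq_zero hf hz d j hj, hjk, pow_add]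
      field_simp
      ring
    · rw [((disjoint_dyadic N hjk).mono_left (dyadic_subset_dyadic_div N d j)).inter_eq,
        Measure.restrict_empty, integral_zero_measure]
  have hne : ∀ᵐ x : ℝ, x ≠ 0 := by simp [ae_iff, measure_singleton]
  have hconst : ∀ᵐ x ∂volume.restrict K, |f x| = |c| := by
    rw [ae_restrict_iff' (measurableSet_dyadic N k)]
    filter_upwards [ae_eq_zero_of_integral_dyadic_eq_zero hu N hcells, hne] with x hx hx0 hxK
    have := hx (lt_of_le_of_ne (nonneg_of_mem_dyadic hxK) (Ne.symm hx0))
    rw [indicator_of_mem hxK, sub_eq_zero] at this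
    rw [this]
  rw [integral_congr_ae hconst, setIntegral_const, measureReal_dyadic, smul_eq_mul, abs_mul,
    abs_pow, abs_two]
  field_simp

lemma abs_dyadicIntegral_le {u : ℝ → ℝ} (hu : Integrable u) {C : ℝ}
    (h0 : |dyadicIntegral u 0 0| ≤ C) (h : ∀ n k, k < 2 ^ n → |haarC u n k| ≤ C) :
    ∀ n k, k < 2 ^ n → |dyadicIntegral u n k| ≤ C := by
  intro n
  induction n with
  | zero =>
    intro k hk
    obtain rfl : k = 0 := by simpa using hk
    exact h0
  | succ n ih =>
    intro k hk
    have hk2 : k / 2 < 2 ^ n := by rw [Nat.div_lt_iff_lt_mul two_pos, ← pow_succ]; exact hk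
    linarith [abs_dyadicIntegral_succ_le hu n k, ih _ hk2, h n _ hk2]

lemma exists_haarC_eq_zero_of_finite {f : ℝ → ℝ}
    (h : {p : ℕ × ℕ | p.2 < 2 ^ p.1 ∧ haarC f p.1 p.2 ≠ 0}.Finite) :
    ∃ N, ∀ m j, N ≤ m → j < 2 ^ m → haarC f m j = 0 := by
  obtain ⟨B, hB⟩ := (h.image Prod.fst).bddAbove
  refine ⟨B + 1, fun m j hm hj => by_contra fun hne => ?_⟩
  have := hB (mem_image_of_mem Prod.fst (show (m, j) ∈ _ from ⟨hj, hne⟩))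
  simp only at this
  omega

def HaarZeroBelow (f : ℝ → ℝ) : ℕ → ℕ → ℕ → Prop
  | 0, n, k => haarC f n k = 0
  | m + 1, n, k => haarC f n k = 0 ∧ HaarZeroBelow f m (n + 1) (2 * k) ∧
      HaarZeroBelow f m (n + 1) (2 * k + 1)

lemma two_mul_lt_two_pow_succ {n k : ℕ} (hk : k < 2 ^ n) : 2 * k + 1 < 2 ^ (n + 1) := by
  rw [pow_succ]; omega

theorem integral_abs_dyadic_of_haarZeroBelow {f : ℝ → ℝ} (hf : Integrable f) {N : ℕ}
    (hz : ∀ m j, N ≤ m → j < 2 ^ m → haarC f m j = 0) :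
    ∀ m n k, n + m = N → k < 2 ^ n → HaarZeroBelow f m n k →
      ∫ x in dyadic n k, |f x| = |dyadicIntegral f n k|
  | 0, n, k, hn, hk, _ => by
    subst hn; exact integral_abs_dyadic_of_haarC_eq_zero hf hz hk
  | m + 1, n, k, hn, hk, ⟨h0, h₁, h₂⟩ => by
    have hsplit := dyadicIntegral_eq_add hf.abs n k
    simp only [dyadicIntegral] at hsplit
    have hk₂ := two_mul_lt_two_pow_succ hk
    have hchildren : dyadicIntegral f (n + 1) (2 * k) = dyadicIntegral f (n + 1) (2 * k + 1) :=
      sub_eq_zero.mp h0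
    rw [hsplit, integral_abs_dyadic_of_haarZeroBelow hf hz m _ _ (by omega) (by omega) h₁,
      integral_abs_dyadic_of_haarZeroBelow hf hz m _ _ (by omega) hk₂ h₂,
      dyadicIntegral_eq_add hf n k, hchildren, ← two_mul, ← two_mul, abs_mul, abs_two]

section Potential

variable {α β : ℝ}

def phi (α β s : ℝ) : ℝ := min 2 (β / 2 * max (α - s) 0)

def activePot (α β u a b : ℝ) : ℝ :=
  if u = 0 then 2 + SignType.sign a * b else 2 - |b| + phi α β |a + b|

def quietPot (β a b : ℝ) : ℝ := (1 + β) * |a + b| - |a|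

def pot (α β : ℝ) (quiet : Prop) (u a b : ℝ) : ℝ :=
  if quiet then quietPot β a b else activePot α β u a b

lemma abs_sign_mul_le (a b : ℝ) : |(SignType.sign a : ℝ) * b| ≤ |b| := by
  rw [abs_mul]
  rcases lt_trichotomy a 0 with h | rfl | h <;> simp [*]

lemma sign_add_self (a : ℝ) : SignType.sign (a + a) = SignType.sign a := by
  rw [← two_mul, sign_mul, sign_pos two_pos, one_mul]

lemma phi_nonneg (hβ : 0 ≤ β) (s : ℝ) : 0 ≤ phi α β s :=
  le_min zero_le_two (by positivity)

lemma phi_le_two (s : ℝ) : phi α β s ≤ 2 := min_le_left _ _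

lemma phi_le_add (hβ : 0 ≤ β) (s t : ℝ) : phi α β s ≤ phi α β t + β / 2 * |s - t| := by
  have hβ2 : 0 ≤ β / 2 := by positivity
  have hmax : max (α - s) 0 ≤ max (α - t) 0 + |s - t| :=
    max_le (by linarith [le_max_left (α - t) 0, neg_abs_le (s - t)]) (by positivity)
  rw [phi, phi, ← min_add_add_right]
  refine min_le_min (by linarith [mul_nonneg hβ2 (abs_nonneg (s - t))]) ?_
  nlinarith [mul_le_mul_of_nonneg_left hmax hβ2]

lemma phi_le_of_sub_le (hβ : 0 ≤ β) {s t : ℝ} (ht : 0 ≤ t) (h : α - s ≤ t) :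
    phi α β s ≤ β / 2 * t :=
  (min_le_right _ _).trans (mul_le_mul_of_nonneg_left (max_le h ht) (by positivity))

lemma one_le_phi_add (hβ : 0 ≤ β) (hαβ : α * β = 5) {s : ℝ} (hs : 0 ≤ s) :
    1 ≤ phi α β s + β * s := by
  rcases le_total 1 (β * s) with h | h
  · linarith [phi_nonneg (α := α) hβ s]
  · have h2 : 2 ≤ β / 2 * max (α - s) 0 := by
      nlinarith [mul_le_mul_of_nonneg_left (le_max_left (α - s) 0) (by positivity : 0 ≤ β / 2)]
    rw [phi, min_eq_left h2]
    nlinarith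

lemma two_sub_abs_le_activePot (hβ : 0 ≤ β) (u a b : ℝ) : 2 - |b| ≤ activePot α β u a b := by
  rw [activePot]
  split_ifs
  · linarith [(abs_le.mp (abs_sign_mul_le a b)).1]
  · linarith [phi_nonneg (α := α) hβ |a + b|]

lemma activePot_le (hb : |b| ≤ 1) (u a : ℝ) : activePot α β u a b ≤ 4 - |b| := by
  rw [activePot]
  split_ifs
  · linarith [(abs_le.mp (abs_sign_mul_le a b)).2]
  · linarith [phi_le_two (α := α) (β := β) |a + b|]

lemma activePot_neg (u a b : ℝ) : activePot α β (-u) a b = activePot α β u a b := by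
  simp only [activePot, neg_eq_zero]

lemma activePot_le_add_activePot (hβ : 0 ≤ β) {b : ℝ} (hb : |b + b| ≤ 1) (u a u₁ a₁ u₂ a₂ : ℝ) :
    activePot α β u a (b + b) ≤ activePot α β u₁ a₁ b + activePot α β u₂ a₂ b := by
  have hbb : |b + b| = 2 * |b| := by rw [← two_mul, abs_mul, abs_two]
  linarith [activePot_le (α := α) (β := β) hb u a, two_sub_abs_le_activePot (α := α) hβ u₁ a₁ b,
    two_sub_abs_le_activePot (α := α) hβ u₂ a₂ b]

lemma activePot_zero_le_add_activePot_zero (a b₁ b₂ : ℝ) :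
    activePot α β 0 (a + a) (b₁ + b₂) ≤ activePot α β 0 a b₁ + activePot α β 0 a b₂ := by
  simp only [activePot, if_pos, sign_add_self]
  linarith

lemma activePot_zero_le_add_quietPot (hβ : 0 ≤ β) (a b₁ b₂ : ℝ) :
    activePot α β 0 (a + a) (b₁ + b₂) ≤ activePot α β 0 a b₁ + quietPot β a b₂ := by
  have hsign : SignType.sign a * (a + b₂) ≤ |a + b₂| := (le_abs_self _).trans (abs_sign_mul_le _ _)
  simp only [activePot, quietPot, if_pos, sign_add_self]
  nlinarith [sign_mul_self a, mul_nonneg hβ (abs_nonneg (a + b₂))]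

lemma activePot_le_add_quietPot_of_ne (hβ : 0 ≤ β) {a₁ a₂ : ℝ} (hα : α ≤ |a₁ - a₂|)
    (hne : a₁ - a₂ ≠ 0) (u₁ b : ℝ) :
    activePot α β (a₁ - a₂) (a₁ + a₂) (b + b) ≤ activePot α β u₁ a₁ b + quietPot β a₂ b := by
  have ha₂ : |a₂| ≤ |a₂ + b| + |b| := by simpa using abs_sub (a₂ + b) b
  have hbb : |b + b| = 2 * |b| := by rw [← two_mul, abs_mul, abs_two]
  have hphi : phi α β |a₁ + a₂ + (b + b)| ≤
      activePot α β u₁ a₁ b - (2 - |b|) + β * |a₂ + b| := by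
    rw [activePot]
    split_ifs
    · have hgap : α - |a₁ + a₂ + (b + b)| ≤ 2 * |a₂ + b| := by
        have := abs_sub (a₁ + a₂ + (b + b)) (2 * (a₂ + b))
        rw [abs_mul, abs_two, show a₁ + a₂ + (b + b) - 2 * (a₂ + b) = a₁ - a₂ by ring] at this
        linarith
      linarith [phi_le_of_sub_le hβ (by positivity) hgap, (abs_le.mp (abs_sign_mul_le a₁ b)).1]
    · have hlip : abs (|a₁ + a₂ + (b + b)| - |a₁ + b|) ≤ |a₂ + b| := by
        simpa [show a₁ + a₂ + (b + b) - (a₁ + b) = a₂ + b by ring] using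
          abs_abs_sub_abs_le_abs_sub (a₁ + a₂ + (b + b)) (a₁ + b)
      nlinarith [phi_le_add (α := α) hβ |a₁ + a₂ + (b + b)| |a₁ + b|, abs_nonneg (a₂ + b)]
  rw [activePot, if_neg hne, quietPot]
  nlinarith [abs_nonneg (a₂ + b)]

lemma activePot_le_quietPot_add_quietPot (hβ : 0 ≤ β) (hαβ : α * β = 5) {a₁ a₂ : ℝ}
    (hα : α ≤ |a₁ - a₂|) (hne : a₁ - a₂ ≠ 0) (b : ℝ) :
    activePot α β (a₁ - a₂) (a₁ + a₂) (b + b) ≤ quietPot β a₁ b + quietPot β a₂ b := by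
  have ha₁ : |a₁| ≤ |a₁ + b| + |b| := by simpa using abs_sub (a₁ + b) b
  have ha₂ : |a₂| ≤ |a₂ + b| + |b| := by simpa using abs_sub (a₂ + b) b
  have hbb : |b + b| = 2 * |b| := by rw [← two_mul, abs_mul, abs_two]
  have hsum : α ≤ |a₁ + b| + |a₂ + b| := by
    have := abs_sub (a₁ + b) (a₂ + b)
    rw [show a₁ + b - (a₂ + b) = a₁ - a₂ by ring] at this
    linarith
  rw [activePot, if_neg hne, quietPot, quietPot]
  nlinarith [phi_le_two (α := α) (β := β) |a₁ + a₂ + (b + b)|, mul_le_mul_of_nonneg_left hsum hβ]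

lemma activePot_zero_le_add_quietPot_of_ne (hβ : 0 ≤ β) (hαβ : α * β = 5) {a b u₁ : ℝ}
    (hb : |b + b| ≤ 1) (hu₁ : u₁ ≠ 0) :
    activePot α β 0 (a + a) (b + b) ≤ activePot α β u₁ a b + quietPot β a b := by
  have hdouble : ∀ x : ℝ, |x + x| = 2 * |x| := fun x => by rw [← two_mul, abs_mul, abs_two]
  have hsign : SignType.sign a * ((a + b) + (a + b)) ≤ 2 * |a + b| :=
    (le_abs_self _).trans ((abs_sign_mul_le _ _).trans (hdouble _).le)
  have haa : (SignType.sign a : ℝ) * (a + a) = 2 * |a| := by rw [mul_add, sign_mul_self]; ring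
  have hab : |a + b| ≤ |a| + |b| := abs_add_le a b
  rw [hdouble] at hb
  simp only [activePot, quietPot, if_pos, if_neg hu₁, sign_add_self]
  linarith [one_le_phi_add hβ hαβ (abs_nonneg (a + b))]

lemma activePot_le_add_quietPot (hβ : 0 ≤ β) (hαβ : α * β = 5) {a₁ a₂ b₁ b₂ u₁ : ℝ}
    (hT : a₁ - a₂ ≠ 0 → b₁ - b₂ = 0 ∧ α ≤ |a₁ - a₂|)
    (hS : b₁ - b₂ ≠ 0 → ¬(a₁ - a₂ = 0 ∧ u₁ ≠ 0)) (hb : |b₁ + b₂| ≤ 1) :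
    activePot α β (a₁ - a₂) (a₁ + a₂) (b₁ + b₂) ≤ activePot α β u₁ a₁ b₁ + quietPot β a₂ b₂ := by
  by_cases hu : a₁ - a₂ = 0
  · obtain rfl : a₁ = a₂ := sub_eq_zero.mp hu
    rw [sub_self]
    by_cases hu₁ : u₁ = 0
    · subst hu₁; exact activePot_zero_le_add_quietPot hβ a₁ b₁ b₂
    · obtain rfl : b₁ = b₂ := sub_eq_zero.mp (by_contra fun hv => hS hv ⟨sub_self a₁, hu₁⟩)
      exact activePot_zero_le_add_quietPot_of_ne hβ hαβ hb hu₁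
  · obtain ⟨hv, hα⟩ := hT hu
    obtain rfl : b₁ = b₂ := sub_eq_zero.mp hv
    exact activePot_le_add_quietPot_of_ne hβ hα hu u₁ b₁

-- A node is described through its children: its integrals are `a₁ + a₂`, `b₁ + b₂` and its Haar
-- coefficients are `a₁ - a₂`, `b₁ - b₂`.
theorem activePot_le_pot_add_pot (hβ : 0 ≤ β) (hαβ : α * β = 5) {a₁ a₂ b₁ b₂ u₁ u₂ : ℝ}
    {q₁ q₂ : Prop} (hT : a₁ - a₂ ≠ 0 → b₁ - b₂ = 0 ∧ α ≤ |a₁ - a₂|)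
    (hS : b₁ - b₂ ≠ 0 → ¬(a₁ - a₂ = 0 ∧ (u₁ ≠ 0 ∨ u₂ ≠ 0))) (hb : |b₁ + b₂| ≤ 1)
    (hactive : ¬(a₁ - a₂ = 0 ∧ q₁ ∧ q₂)) :
    activePot α β (a₁ - a₂) (a₁ + a₂) (b₁ + b₂) ≤ pot α β q₁ u₁ a₁ b₁ + pot α β q₂ u₂ a₂ b₂ := by
  rw [pot, pot]
  split_ifs with h₁ h₂ h₂
  · have hu : a₁ - a₂ ≠ 0 := fun hu => hactive ⟨hu, h₁, h₂⟩
    obtain ⟨hv, hα⟩ := hT hu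
    obtain rfl : b₁ = b₂ := sub_eq_zero.mp hv
    exact activePot_le_quietPot_add_quietPot hβ hαβ hα hu b₁
  · rw [add_comm (quietPot β a₁ b₁), ← activePot_neg, neg_sub, add_comm a₁, add_comm b₁]
    refine activePot_le_add_quietPot hβ hαβ (fun hu => ?_) (fun hv hS' => ?_) (by rwa [add_comm])
    · obtain ⟨hv, hα⟩ := hT (by rwa [← neg_sub, neg_ne_zero] at hu)
      exact ⟨by linarith, by rwa [abs_sub_comm]⟩
    · exact hS (by rwa [← neg_sub, neg_ne_zero] at hv) ⟨by linarith [hS'.1], Or.inr hS'.2⟩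
  · exact activePot_le_add_quietPot hβ hαβ hT (fun hv hS' => hS hv ⟨hS'.1, Or.inl hS'.2⟩) hb
  · by_cases hv : b₁ - b₂ = 0
    · obtain rfl : b₁ = b₂ := sub_eq_zero.mp hv
      exact activePot_le_add_activePot hβ hb _ _ _ _ _ _
    · have hu : a₁ - a₂ = 0 := not_imp_comm.mp hT (fun h => hv h.1)
      obtain rfl : a₁ = a₂ := sub_eq_zero.mp hu
      have hu₁ : u₁ = 0 := by by_contra h; exact hS hv ⟨hu, Or.inl h⟩
      have hu₂ : u₂ = 0 := by by_contra h; exact hS hv ⟨hu, Or.inr h⟩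
      rw [sub_self, hu₁, hu₂]
      exact activePot_zero_le_add_activePot_zero a₁ b₁ b₂

lemma pot_nonneg_of_eq_zero (hβ : 0 ≤ β) (q : Prop) (u a : ℝ) : 0 ≤ pot α β q u a 0 := by
  rw [pot]
  split_ifs
  · rw [quietPot, add_zero]; nlinarith [abs_nonneg a]
  · linarith [two_sub_abs_le_activePot (α := α) hβ u a 0, abs_zero (α := ℝ)]

end Potential

theorem integral_abs_add_pot_le_of_haarZeroBelow {f g : ℝ → ℝ} (hf : Integrable f)
    (hg : Integrable g) {α β : ℝ} (hβ : 0 ≤ β) {N : ℕ}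
    (hz : ∀ m j, N ≤ m → j < 2 ^ m → haarC f m j = 0) {m n k : ℕ} (hn : n + m = N)
    (hk : k < 2 ^ n) (hq : HaarZeroBelow f m n k) :
    (∫ x in dyadic n k, |f x|) + pot α β (HaarZeroBelow f m n k) (haarC f n k)
        (dyadicIntegral f n k) (dyadicIntegral g n k) ≤
      (1 + β) * ∫ x in dyadic n k, |f x + g x| := by
  have hsum : dyadicIntegral f n k + dyadicIntegral g n k = ∫ x in dyadic n k, f x + g x :=
    (integral_add hf.integrableOn hg.integrableOn).symm
  rw [pot, if_pos hq, quietPot, integral_abs_dyadic_of_haarZeroBelow hf hz m n k hn hk hq, hsum]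
  nlinarith [abs_integral_le_integral_abs (f := fun x => f x + g x)
    (μ := volume.restrict (dyadic n k))]

theorem integral_abs_add_pot_le {f g : ℝ → ℝ} (hf : Integrable f) (hg : Integrable g) {α β : ℝ}
    (hβ : 0 ≤ β) (hαβ : α * β = 5) {N : ℕ} (hz : ∀ m j, N ≤ m → j < 2 ^ m → haarC f m j = 0)
    (hdisj : ∀ n k : ℕ, k < 2 ^ n → haarC f n k ≠ 0 → haarC g n k = 0)
    (hgF : ∀ n k : ℕ, k < 2 ^ n → haarC g n k ≠ 0 →
      ¬ (haarC f n k = 0 ∧ (haarC f (n + 1) (2 * k) ≠ 0 ∨ haarC f (n + 1) (2 * k + 1) ≠ 0)))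
    (hflb : ∀ n k : ℕ, k < 2 ^ n → haarC f n k ≠ 0 → α ≤ |haarC f n k|)
    (hgb : ∀ n k : ℕ, k < 2 ^ n → |dyadicIntegral g n k| ≤ 1) :
    ∀ m n k, n + m = N → k < 2 ^ n →
      (∫ x in dyadic n k, |f x|) + pot α β (HaarZeroBelow f m n k) (haarC f n k)
          (dyadicIntegral f n k) (dyadicIntegral g n k) ≤
        (1 + β) * ∫ x in dyadic n k, |f x + g x| := by
  intro m
  induction m with
  | zero =>
    intro n k hn hk
    exact integral_abs_add_pot_le_of_haarZeroBelow hf hg hβ hz hn hk (hz n k (by omega) hk)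
  | succ m ih =>
    intro n k hn hk
    by_cases hq : HaarZeroBelow f (m + 1) n k
    · exact integral_abs_add_pot_le_of_haarZeroBelow hf hg hβ hz hn hk hq
    have hk₁ : 2 * k < 2 ^ (n + 1) := by have := two_mul_lt_two_pow_succ hk; omega
    have hk₂ := two_mul_lt_two_pow_succ hk
    have hf_split := dyadicIntegral_eq_add hf.abs n k
    have hfg : Integrable (fun x => f x + g x) := hf.add hg
    have hh_split := dyadicIntegral_eq_add hfg.abs n k
    simp only [dyadicIntegral] at hf_split hh_split
    have hlocal := activePot_le_pot_add_pot hβ hαβ (a₁ := dyadicIntegral f (n + 1) (2 * k))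
      (a₂ := dyadicIntegral f (n + 1) (2 * k + 1)) (b₁ := dyadicIntegral g (n + 1) (2 * k))
      (b₂ := dyadicIntegral g (n + 1) (2 * k + 1)) (q₁ := HaarZeroBelow f m (n + 1) (2 * k))
      (q₂ := HaarZeroBelow f m (n + 1) (2 * k + 1)) (u₁ := haarC f (n + 1) (2 * k))
      (u₂ := haarC f (n + 1) (2 * k + 1))
      (fun hu => ⟨hdisj n k hk hu, hflb n k hk hu⟩) (hgF n k hk)
      (dyadicIntegral_eq_add hg n k ▸ hgb n k hk) hq
    rw [pot, if_neg hq, dyadicIntegral_eq_add hf n k, dyadicIntegral_eq_add hg n k, haarC_eq_sub,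
      hf_split, hh_split]
    linarith [ih (n + 1) (2 * k) (by omega) hk₁, ih (n + 1) (2 * k + 1) (by omega) hk₂]

end DyadicHaar

open DyadicHaar

theorem stmt9_general (f g : ℝ → ℝ) (hf : Integrable f) (hg : Integrable g)
    (hfs : ∀ x, x ∉ Set.Ico (0 : ℝ) 1 → f x = 0)
    (hgroot : hcoef g HIdx.root = 0)
    (hffin : {p : ℕ × ℕ | p.2 < 2 ^ p.1 ∧ haarC f p.1 p.2 ≠ 0}.Finite)
    (hdisj : ∀ n k : ℕ, k < 2 ^ n → haarC f n k ≠ 0 → haarC g n k = 0)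
    (hgF : ∀ n k : ℕ, k < 2 ^ n → haarC g n k ≠ 0 →
      ¬ (haarC f n k = 0 ∧ (haarC f (n + 1) (2 * k) ≠ 0 ∨ haarC f (n + 1) (2 * k + 1) ≠ 0)))
    (α : ℝ) (hα : 0 < α)
    (hflb : ∀ n k : ℕ, k < 2 ^ n → haarC f n k ≠ 0 → α ≤ |haarC f n k|)
    (hgub : ∀ n k : ℕ, k < 2 ^ n → |haarC g n k| ≤ 1) :
    (∫ x, |f x|) ≤ (5 / α + 1) * ∫ x, |f x + g x| := by
  have hβ : 0 ≤ 5 / α := by positivity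
  have hαβ : α * (5 / α) = 5 := by field_simp
  have hg0 : dyadicIntegral g 0 0 = 0 := by rw [dyadicIntegral, dyadic_zero_zero]; exact hgroot
  obtain ⟨N, hz⟩ := exists_haarC_eq_zero_of_finite hffin
  have hgb := abs_dyadicIntegral_le hg (by rw [hg0, abs_zero]; exact zero_le_one) hgub
  have hroot := integral_abs_add_pot_le hf hg hβ hαβ hz hdisj hgF hflb hgb N 0 0 (zero_add N)
    (by positivity)
  rw [hg0, dyadic_zero_zero] at hroot
  have hpot := pot_nonneg_of_eq_zero (α := α) hβ (HaarZeroBelow f N 0 0) (haarC f 0 0)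
    (dyadicIntegral f 0 0)
  have hf01 : ∫ x in Ico 0 1, |f x| = ∫ x, |f x| :=
    setIntegral_eq_integral_of_forall_compl_eq_zero fun x hx => by rw [hfs x hx, abs_zero]
  have hh01 : ∫ x in Ico 0 1, |f x + g x| ≤ ∫ x, |f x + g x| :=
    setIntegral_le_integral (hf.add hg).abs (ae_of_all _ fun x => abs_nonneg _)
  calc ∫ x, |f x| ≤ (1 + 5 / α) * ∫ x in Ico 0 1, |f x + g x| := by linarith
    _ ≤ (5 / α + 1) * ∫ x, |f x + g x| := by rw [add_comm]; gcongr

/-- Lemma 3.5: if `f, g` have finite disjoint Haar supports strictly inside `[0,1]`,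
`supp_H(g)` avoids `F(f)`, `|c_J(f)| ≥ α` on `supp_H(f)` and `|c_J(g)| ≤ 1`, then
`‖f‖ ≤ (5/α + 1)‖f + g‖`. -/
theorem stmt9 (f g : ℝ → ℝ) (hf : Integrable f) (hg : Integrable g)
    (hfs : ∀ x, x ∉ Set.Ico (0 : ℝ) 1 → f x = 0)
    (hgs : ∀ x, x ∉ Set.Ico (0 : ℝ) 1 → g x = 0)
    (hfroot : hcoef f HIdx.root = 0) (hgroot : hcoef g HIdx.root = 0)
    (hf01 : haarC f 0 0 = 0) (hg01 : haarC g 0 0 = 0)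
    (hffin : {p : ℕ × ℕ | p.2 < 2 ^ p.1 ∧ haarC f p.1 p.2 ≠ 0}.Finite)
    (hgfin : {p : ℕ × ℕ | p.2 < 2 ^ p.1 ∧ haarC g p.1 p.2 ≠ 0}.Finite)
    (hdisj : ∀ n k : ℕ, k < 2 ^ n → haarC f n k ≠ 0 → haarC g n k = 0)
    (hgF : ∀ n k : ℕ, k < 2 ^ n → haarC g n k ≠ 0 →
      ¬ (haarC f n k = 0 ∧ (haarC f (n + 1) (2 * k) ≠ 0 ∨ haarC f (n + 1) (2 * k + 1) ≠ 0)))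
    (α : ℝ) (hα : 0 < α)
    (hflb : ∀ n k : ℕ, k < 2 ^ n → haarC f n k ≠ 0 → α ≤ |haarC f n k|)
    (hgub : ∀ n k : ℕ, k < 2 ^ n → |haarC g n k| ≤ 1) :
    (∫ x, |f x|) ≤ (5 / α + 1) * ∫ x, |f x + g x| :=
  stmt9_general f g hf hg hfs hgroot hffin hdisj hgF α hα hflb hgub
end
end

section
/- A semi-normalized basis (e_i) of a Banach space X is near-unconditional (for all δ ∈ (0,1] there is C(δ) such that ‖P_A(x)‖ ≤ C(δ)‖x‖ whenever sup|a_i| ≤ 1, x = Σ a_i e_i, and A ⊆ {i : |a_i| ≥ δ} is finite) if and only if the thresholding operators are bounded: for all δ there is C₁(δ) with ‖G_δ(x)‖ ≤ C₁(δ)‖x‖ for all x with sup|a_i| ≤ 1, where G_δ(x) = Σ_{|a_i| ≥ δ} a_i e_i. -/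
/-! Threshold bounds are monotone in the level: rescaling `x` by `s / t ≤ 1` moves the level set
`{t ≤ |aᵢ|}` to `{s ≤ |aᵢ|}`, so the constant at level `δ` serves every level in `[δ, 1]`.
Given `A ⊆ {δ ≤ |aᵢ|}`, shrink the coordinates of `x` outside `A` by `1 - μ`, where `μ * C ≤ 1 / 2`:
the threshold set at level `t` of the new vector is `A` together with coordinates that are large at
the higher level `t / (1 - μ)`, and the perturbation costs at most `μ * C * ‖P_A x‖`, which is
absorbed. Hence `K(t) ≤ 2 * (C + K(t / (1 - μ)))`, and after finitely many steps the level exceeds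
`1`, where `K = 0`. -/

open Filter

theorem tendsto_zero_of_tendsto_sum_range {X : Type*} [NormedAddCommGroup X] {f : ℕ → X} {x : X}
    (h : Tendsto (fun N => ∑ i ∈ Finset.range N, f i) atTop (nhds x)) :
    Tendsto f atTop (nhds 0) := by
  have h' := (h.comp (tendsto_add_atTop_nat 1)).sub h
  simpa [Function.comp_def, Finset.sum_range_succ] using h'

section

variable {X : Type*} [NormedAddCommGroup X] [NormedSpace ℝ X] {e : ℕ → X} {a : X → ℕ → ℝ}

theorem isLinearMap_of_unique_expansion
    (hbasis : ∀ x : X, Tendsto (fun N => ∑ i ∈ Finset.range N, a x i • e i) atTop (nhds x))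
    (huniq : ∀ (x : X) (c : ℕ → ℝ),
      Tendsto (fun N => ∑ i ∈ Finset.range N, c i • e i) atTop (nhds x) → c = a x) :
    IsLinearMap ℝ a where
  map_add x y := (huniq _ _ <| by
    simpa only [Pi.add_apply, add_smul, Finset.sum_add_distrib] using
      (hbasis x).add (hbasis y)).symm
  map_smul c x := (huniq _ _ <| by
    simpa only [Pi.smul_apply, smul_eq_mul, mul_smul, Finset.smul_sum] using
      (hbasis x).const_smul c).symm

theorem coeff_basis_eq_single
    (huniq : ∀ (x : X) (c : ℕ → ℝ),
      Tendsto (fun N => ∑ i ∈ Finset.range N, c i • e i) atTop (nhds x) → c = a x) (j : ℕ) :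
    a (e j) = Pi.single j 1 := by
  refine (huniq _ _ (tendsto_atTop_of_eventually_const (i₀ := j + 1) fun N hN => ?_)).symm
  simp [Pi.single_apply, Finset.mem_range, show j < N by omega]

theorem finite_setOf_le_abs_coeff
    (hbasis : ∀ x : X, Tendsto (fun N => ∑ i ∈ Finset.range N, a x i • e i) atTop (nhds x))
    {m : ℝ} (hm : 0 < m) (hme : ∀ i, m ≤ ‖e i‖) (x : X) {t : ℝ} (ht : 0 < t) :
    {i | t ≤ |a x i|}.Finite := by
  have hterm := tendsto_zero_of_tendsto_sum_range (hbasis x)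
  have hcoeff : Tendsto (fun i => |a x i|) atTop (nhds 0) := by
    refine squeeze_zero (fun i => abs_nonneg _) (fun i => ?_) ((hterm.norm.div_const m).trans ?_)
    · rw [le_div_iff₀ hm, ← Real.norm_eq_abs, norm_smul]
      exact mul_le_mul_of_nonneg_left (hme i) (norm_nonneg _)
    · simp
  rw [← Nat.cofinite_eq_atTop] at hcoeff
  simpa using hcoeff.eventually (gt_mem_nhds ht)

def ThresholdBounded (e : ℕ → X) (a : X → ℕ → ℝ) (t C : ℝ) : Prop :=
  ∀ x : X, (∀ i, |a x i| ≤ 1) → ∀ A : Finset ℕ, (∀ i, i ∈ A ↔ t ≤ |a x i|) →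
    ‖∑ i ∈ A, a x i • e i‖ ≤ C * ‖x‖

def NearUnconditionalAt (e : ℕ → X) (a : X → ℕ → ℝ) (t C : ℝ) : Prop :=
  ∀ x : X, (∀ i, |a x i| ≤ 1) → ∀ A : Finset ℕ, (∀ i ∈ A, t ≤ |a x i|) →
    ‖∑ i ∈ A, a x i • e i‖ ≤ C * ‖x‖

theorem NearUnconditionalAt.thresholdBounded {t C : ℝ} (h : NearUnconditionalAt e a t C) :
    ThresholdBounded e a t C :=
  fun x hx A hA => h x hx A fun i hi => (hA i).1 hi

theorem ThresholdBounded.mono_const {t C C' : ℝ} (h : ThresholdBounded e a t C) (hC : C ≤ C') :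
    ThresholdBounded e a t C' :=
  fun x hx A hA => (h x hx A hA).trans (by gcongr)

theorem coeff_sum_smul (hlin : IsLinearMap ℝ a) (he : ∀ j, a (e j) = Pi.single j 1)
    (F : Finset ℕ) (w : ℕ → ℝ) (i : ℕ) :
    a (∑ j ∈ F, w j • e j) i = if i ∈ F then w i else 0 := by
  have := map_sum (IsLinearMap.mk' a hlin) (fun j => w j • e j) F
  simp only [IsLinearMap.mk'_apply, hlin.map_smul, he] at this
  simp [this, Finset.sum_apply, Pi.single_apply]

theorem ThresholdBounded.mono (hlin : IsLinearMap ℝ a) {s t C : ℝ}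
    (h : ThresholdBounded e a s C) (hs : 0 < s) (hst : s ≤ t) : ThresholdBounded e a t C := by
  intro x hx A hA
  have ht : 0 < t := hs.trans_le hst
  have hr : 0 < s / t := div_pos hs ht
  have hcoeff : ∀ i, a ((s / t) • x) i = s / t * a x i := fun i => by
    rw [hlin.map_smul, Pi.smul_apply, smul_eq_mul]
  have key := h ((s / t) • x) (fun i => ?_) A (fun i => ?_)
  · simp only [hcoeff, mul_smul, ← Finset.smul_sum, norm_smul, Real.norm_of_nonneg hr.le] at key
    rw [mul_left_comm] at key
    exact le_of_mul_le_mul_left key hr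
  · rw [hcoeff, abs_mul, abs_of_pos hr]
    exact mul_le_one₀ ((div_le_one ht).2 hst) (abs_nonneg _) (hx i)
  · rw [hA i, hcoeff, abs_mul, abs_of_pos hr, div_mul_eq_mul_div, le_div_iff₀ ht, mul_comm s,
      mul_comm t]
    exact (mul_le_mul_iff_right₀ hs).symm

theorem NearUnconditionalAt.descend (hlin : IsLinearMap ℝ a) (he : ∀ j, a (e j) = Pi.single j 1)
    (hfin : ∀ x t, 0 < t → {i | t ≤ |a x i|}.Finite) {t μ C K : ℝ} (ht : 0 < t)
    (hμ : 0 < μ) (hμ1 : μ < 1) (hC : 0 ≤ C) (hμC : μ * C ≤ 1 / 2)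
    (hK : NearUnconditionalAt e a (t / (1 - μ)) K) (hthr : ThresholdBounded e a t C) :
    NearUnconditionalAt e a t (2 * (C + K)) := by
  intro x hx A hA
  have hμ1' : 0 < 1 - μ := sub_pos.2 hμ1
  set P := ∑ i ∈ A, a x i • e i
  set v := (1 - μ) • x + μ • P
  have hv : ∀ i, a v i = if i ∈ A then a x i else (1 - μ) * a x i := fun i => by
    simp only [v, P, hlin.map_add, hlin.map_smul, Pi.add_apply, Pi.smul_apply, smul_eq_mul,
      coeff_sum_smul hlin he]
    split_ifs <;> ring
  have hvA : ∀ i ∈ A, a v i = a x i := fun i hi => by rw [hv, if_pos hi]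
  have hvE : ∀ i ∉ A, |a v i| = (1 - μ) * |a x i| := fun i hi => by
    rw [hv, if_neg hi, abs_mul, abs_of_pos hμ1']
  set B := (hfin v t ht).toFinset
  have hB : ∀ i, i ∈ B ↔ t ≤ |a v i| := fun i => Set.Finite.mem_toFinset _
  have hAB : A ⊆ B := fun i hi => (hB i).2 (by rw [hvA i hi]; exact hA i hi)
  set Q := ∑ i ∈ B \ A, a x i • e i
  have hQ : ‖Q‖ ≤ K * ‖x‖ := hK x hx (B \ A) fun i hi => by
    obtain ⟨hiB, hiA⟩ := Finset.mem_sdiff.1 hi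
    rw [div_le_iff₀' hμ1', ← hvE i hiA]
    exact (hB i).1 hiB
  have hGv : ∑ i ∈ B, a v i • e i = P + (1 - μ) • Q := by
    rw [← Finset.sum_sdiff hAB, add_comm, Finset.smul_sum]
    congr 1
    · exact Finset.sum_congr rfl fun i hi => by rw [hvA i hi]
    · refine Finset.sum_congr rfl fun i hi => ?_
      rw [hv, if_neg (Finset.mem_sdiff.1 hi).2, mul_smul]
  have hvadm : ∀ i, |a v i| ≤ 1 := fun i => by
    by_cases hi : i ∈ A
    · rw [hvA i hi]; exact hx i
    · rw [hvE i hi]; exact mul_le_one₀ (by linarith) (abs_nonneg _) (hx i)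
  have hGnorm : ‖P + (1 - μ) • Q‖ ≤ C * ‖v‖ := hGv ▸ hthr v hvadm B hB
  have hvnorm : ‖v‖ ≤ (1 - μ) * ‖x‖ + μ * ‖P‖ := by
    refine (norm_add_le _ _).trans_eq ?_
    rw [norm_smul, norm_smul, Real.norm_of_nonneg hμ1'.le, Real.norm_of_nonneg hμ.le]
  have hPQ : ‖P‖ ≤ ‖P + (1 - μ) • Q‖ + ‖Q‖ := by
    calc ‖P‖ ≤ ‖P + (1 - μ) • Q‖ + ‖(1 - μ) • Q‖ := norm_le_add_norm_add P _
      _ ≤ ‖P + (1 - μ) • Q‖ + ‖Q‖ := by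
        rw [norm_smul, Real.norm_of_nonneg hμ1'.le]
        gcongr
        exact mul_le_of_le_one_left (norm_nonneg _) (by linarith)
  have hCv : C * ‖v‖ ≤ C * ‖x‖ + ‖P‖ / 2 := by
    calc C * ‖v‖ ≤ C * ((1 - μ) * ‖x‖ + μ * ‖P‖) := by gcongr
      _ ≤ C * ‖x‖ + ‖P‖ / 2 := by
        nlinarith [norm_nonneg x, norm_nonneg P, mul_nonneg hC hμ.le]
  linarith

theorem nearUnconditionalAt_of_one_lt {t : ℝ} (ht : 1 < t) : NearUnconditionalAt e a t 0 := by
  intro x hx A hA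
  rw [Finset.eq_empty_of_forall_notMem fun i hi => ((hA i hi).trans (hx i)).not_gt ht]
  simp

theorem ThresholdBounded.exists_nearUnconditionalAt (hlin : IsLinearMap ℝ a)
    (he : ∀ j, a (e j) = Pi.single j 1) (hfin : ∀ x t, 0 < t → {i | t ≤ |a x i|}.Finite)
    {δ C : ℝ} (hδ : 0 < δ) (h : ThresholdBounded e a δ C) : ∃ K, NearUnconditionalAt e a δ K := by
  set C' := max C 0
  set μ := 1 / (2 * (C' + 1))
  have hC' : 0 ≤ C' := le_max_right C 0
  have hμ : 0 < μ := by positivity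
  have hμC : μ * C' ≤ 1 / 2 := by
    rw [one_div_mul_eq_div, div_le_div_iff₀ (by positivity) two_pos]
    linarith
  have hμ1 : μ < 1 := by
    rw [div_lt_one (by positivity)]
    linarith
  have key : ∀ n : ℕ, ∃ K, ∀ t, δ ≤ t → (1 - μ) ^ n < t → NearUnconditionalAt e a t K := by
    intro n
    induction n with
    | zero => exact ⟨0, fun t _ ht => nearUnconditionalAt_of_one_lt (by simpa using ht)⟩
    | succ n ih =>
      obtain ⟨K, hK⟩ := ih
      refine ⟨2 * (C' + K), fun t hδt ht => ?_⟩
      have hμ1' : 0 < 1 - μ := sub_pos.2 hμ1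
      have hnext := hK (t / (1 - μ))
        (hδt.trans (le_div_self (hδ.le.trans hδt) hμ1' (by linarith)))
        (by rwa [lt_div_iff₀ hμ1', ← pow_succ])
      exact hnext.descend hlin he hfin (hδ.trans_le hδt) hμ hμ1 hC' hμC
        ((h.mono_const (le_max_left C 0)).mono hlin hδ hδt)
  obtain ⟨n, hn⟩ := exists_pow_lt_of_lt_one hδ (by linarith : 1 - μ < 1)
  obtain ⟨K, hK⟩ := key n
  exact ⟨K, hK δ le_rfl hn⟩

end

theorem stmt17_general {X : Type*} [NormedAddCommGroup X] [NormedSpace ℝ X]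
    (e : ℕ → X) (a : X → ℕ → ℝ)
    (hbasis : ∀ x : X, Tendsto (fun N => ∑ i ∈ Finset.range N, a x i • e i) atTop (nhds x))
    (huniq : ∀ (x : X) (c : ℕ → ℝ),
      Tendsto (fun N => ∑ i ∈ Finset.range N, c i • e i) atTop (nhds x) → c = a x)
    (hsemi : ∃ m M : ℝ, 0 < m ∧ ∀ i, m ≤ ‖e i‖ ∧ ‖e i‖ ≤ M) :
    (∀ δ : ℝ, 0 < δ → δ ≤ 1 → ∃ C : ℝ, ∀ x : X, (∀ i, |a x i| ≤ 1) →
        ∀ A : Finset ℕ, (∀ i ∈ A, δ ≤ |a x i|) →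
          ‖∑ i ∈ A, a x i • e i‖ ≤ C * ‖x‖) ↔
    (∀ δ : ℝ, 0 < δ → δ ≤ 1 → ∃ C₁ : ℝ, ∀ x : X, (∀ i, |a x i| ≤ 1) →
        ∀ A : Finset ℕ, (∀ i, i ∈ A ↔ δ ≤ |a x i|) →
          ‖∑ i ∈ A, a x i • e i‖ ≤ C₁ * ‖x‖) := by
  obtain ⟨m, _, hm, hme⟩ := hsemi
  have hlin := isLinearMap_of_unique_expansion hbasis huniq
  have hfin (x : X) (t : ℝ) (ht : 0 < t) :=
    finite_setOf_le_abs_coeff hbasis hm (fun i => (hme i).1) x ht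
  refine ⟨fun H δ hδ hδ1 => ?_, fun H δ hδ hδ1 => ?_⟩
  · obtain ⟨C, hC⟩ := H δ hδ hδ1
    exact ⟨C, NearUnconditionalAt.thresholdBounded (e := e) (a := a) hC⟩
  · obtain ⟨C, hC⟩ := H δ hδ hδ1
    exact ThresholdBounded.exists_nearUnconditionalAt hlin (coeff_basis_eq_single huniq) hfin hδ hC

/-- A semi-normalized Schauder basis `(e_i)` with coefficient functionals `a` is
near-unconditional iff the thresholding operators `G_δ` are bounded. -/
theorem stmt17 {X : Type*} [NormedAddCommGroup X] [NormedSpace ℝ X] [CompleteSpace X]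
    (e : ℕ → X) (a : X → ℕ → ℝ)
    (hbasis : ∀ x : X, Tendsto (fun N => ∑ i ∈ Finset.range N, a x i • e i) atTop (nhds x))
    (huniq : ∀ (x : X) (c : ℕ → ℝ),
      Tendsto (fun N => ∑ i ∈ Finset.range N, c i • e i) atTop (nhds x) → c = a x)
    (hsemi : ∃ m M : ℝ, 0 < m ∧ ∀ i, m ≤ ‖e i‖ ∧ ‖e i‖ ≤ M) :
    (∀ δ : ℝ, 0 < δ → δ ≤ 1 → ∃ C : ℝ, ∀ x : X, (∀ i, |a x i| ≤ 1) →
        ∀ A : Finset ℕ, (∀ i ∈ A, δ ≤ |a x i|) →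
          ‖∑ i ∈ A, a x i • e i‖ ≤ C * ‖x‖) ↔
    (∀ δ : ℝ, 0 < δ → δ ≤ 1 → ∃ C₁ : ℝ, ∀ x : X, (∀ i, |a x i| ≤ 1) →
        ∀ A : Finset ℕ, (∀ i, i ∈ A ↔ δ ≤ |a x i|) →
          ‖∑ i ∈ A, a x i • e i‖ ≤ C₁ * ‖x‖) :=
  stmt17_general e a hbasis huniq hsemi
end
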